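/- arXiv:2604.15042 — 7 statements merged into one kernel-verified Lean document; each statement's English description precedes it below -/
import Mathlib

section
/- There exists a constant C > 0 such that for all sufficiently large integers s and all integers t with 1 ≤ t ≤ s, the Stirling number of the second kind S(s, t) satisfies S(s, t) ≤ C·(s/log s)^s. -/
/-- The Stirling numbers of the second kind, defined by the standard recurrence
`S(n+1, k+1) = (k+1) * S(n, k+1) + S(n, k)`: `S(s, t)` counts the partitions of a set
of `s` labelled elements into `t` nonempty unlabelled blocks. -/
def stirling2 : ℕ → ℕ → ℕ
  | 0, 0 => 1
  | 0, _ + 1 => 0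
  | _ + 1, 0 => 0
  | n + 1, k + 1 => (k + 1) * stirling2 n (k + 1) + stirling2 n k

open Finset in
/-- The classical identity `∑_{j=0}^{k} C(k,j) ⬝ j! ⬝ S(n,j) = k^n`
(counting maps from an `n`-set to a `k`-set by the size of their image). -/
lemma stirling2_identity (n : ℕ) : ∀ k : ℕ,
    ∑ j ∈ range (k + 1), k.choose j * (j.factorial * stirling2 n j) = k ^ n := by
  induction n with
  | zero =>
    intro k
    rw [Finset.sum_eq_single 0]
    · simp [stirling2]
    · intro b _ hb
      obtain ⟨m, rfl⟩ := Nat.exists_eq_succ_of_ne_zero hb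
      simp [stirling2]
    · simp
  | succ n ih =>
    intro k
    rw [Finset.sum_range_succ']
    have h0 : k.choose 0 * (Nat.factorial 0 * stirling2 (n+1) 0) = 0 := by
      simp [stirling2]
    rw [h0, add_zero]
    have hterm : ∀ j ∈ range k,
        k.choose (j+1) * ((j+1).factorial * stirling2 (n+1) (j+1)) =
        (j+1) * k.choose (j+1) * ((j+1).factorial * stirling2 n (j+1))
          + (k - j) * (k.choose j * (j.factorial * stirling2 n j)) := by
      intro j hj
      have hc : k.choose (j+1) * (j+1) = k.choose j * (k - j) := Nat.choose_succ_right_eq k j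
      have e2 : k.choose (j+1) * ((j+1) * j.factorial * stirling2 n j)
          = (k - j) * (k.choose j * (j.factorial * stirling2 n j)) := by
        calc k.choose (j+1) * ((j+1) * j.factorial * stirling2 n j)
            = (k.choose (j+1) * (j+1)) * (j.factorial * stirling2 n j) := by ring
          _ = (k.choose j * (k - j)) * (j.factorial * stirling2 n j) := by rw [hc]
          _ = _ := by ring
      show k.choose (j+1) * ((j+1).factorial * ((j+1) * stirling2 n (j+1) + stirling2 n j)) = _
      calc k.choose (j+1) * ((j+1).factorial * ((j+1) * stirling2 n (j+1) + stirling2 n j))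
          = (j+1) * k.choose (j+1) * ((j+1).factorial * stirling2 n (j+1))
              + k.choose (j+1) * ((j+1) * j.factorial * stirling2 n j) := by
            rw [Nat.factorial_succ]; ring
        _ = _ := by rw [e2]
    rw [Finset.sum_congr rfl hterm, Finset.sum_add_distrib]
    have hA : ∑ j ∈ range k, (j+1) * k.choose (j+1) * ((j+1).factorial * stirling2 n (j+1))
        = ∑ j ∈ range (k+1), j * k.choose j * (j.factorial * stirling2 n j) := by
      rw [Finset.sum_range_succ']
      simp
    have hB : ∑ j ∈ range k, (k - j) * (k.choose j * (j.factorial * stirling2 n j))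
        = ∑ j ∈ range (k+1), (k - j) * (k.choose j * (j.factorial * stirling2 n j)) := by
      rw [Finset.sum_range_succ]
      simp
    rw [hA, hB, ← Finset.sum_add_distrib]
    have : ∀ j ∈ range (k+1),
        j * k.choose j * (j.factorial * stirling2 n j)
          + (k - j) * (k.choose j * (j.factorial * stirling2 n j))
        = k * (k.choose j * (j.factorial * stirling2 n j)) := by
      intro j hj
      have hjk : j ≤ k := Nat.lt_succ_iff.mp (Finset.mem_range.mp hj)
      have : j + (k - j) = k := Nat.add_sub_cancel' hjk
      calc j * k.choose j * (j.factorial * stirling2 n j)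
            + (k - j) * (k.choose j * (j.factorial * stirling2 n j))
          = (j + (k - j)) * (k.choose j * (j.factorial * stirling2 n j)) := by ring
        _ = _ := by rw [this]
    rw [Finset.sum_congr rfl this, ← Finset.mul_sum, ih k, pow_succ]
    ring

/-- Since `t! ⬝ S(s,t)` counts surjections from an `s`-set onto a `t`-set,
it is at most `t^s`. -/
lemma factorial_mul_stirling2_le (s t : ℕ) : t.factorial * stirling2 s t ≤ t ^ s := by
  have := stirling2_identity s t
  calc t.factorial * stirling2 s t = t.choose t * (t.factorial * stirling2 s t) := by
        rw [Nat.choose_self, one_mul]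
    _ ≤ ∑ j ∈ Finset.range (t+1), t.choose j * (j.factorial * stirling2 s j) :=
        Finset.single_le_sum (f := fun j => t.choose j * (j.factorial * stirling2 s j))
          (fun i _ => Nat.zero_le _) (Finset.self_mem_range_succ t)
    _ = t ^ s := this

/-- The key analytic inequality: for `1 ≤ a ≤ S` with `S > 1`,
`a + (S - a) log a ≤ S (log S - log log S)`. -/
lemma key_ineq {a S : ℝ} (ha : 1 ≤ a) (hS : 1 < S) :
    a + (S - a) * Real.log a ≤ S * (Real.log S - Real.log (Real.log S)) := by
  have ha0 : 0 < a := lt_of_lt_of_le one_pos ha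
  have hS0 : 0 < S := lt_trans one_pos hS
  have hL : 0 < Real.log S := Real.log_pos hS
  set L := Real.log S with hLdef
  have h1 : Real.log (L * a / S) ≤ L * a / S - 1 :=
    Real.log_le_sub_one_of_pos (by positivity)
  have hlog1 : Real.log (L * a / S) = Real.log L + Real.log a - L := by
    rw [Real.log_div (by positivity) (ne_of_gt hS0), Real.log_mul (ne_of_gt hL) (ne_of_gt ha0)]
  rw [hlog1] at h1
  have h2 : Real.log (S / a) ≤ S / a - 1 :=
    Real.log_le_sub_one_of_pos (by positivity)
  have hlog2 : Real.log (S / a) = L - Real.log a := by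
    rw [Real.log_div (ne_of_gt hS0) (ne_of_gt ha0)]
  rw [hlog2] at h2
  have h1' : S * (Real.log L + Real.log a - L) ≤ L * a - S := by
    have := mul_le_mul_of_nonneg_left h1 hS0.le
    calc S * (Real.log L + Real.log a - L) ≤ S * (L * a / S - 1) := this
      _ = L * a - S := by field_simp
  have h2' : a * (L - Real.log a) ≤ S - a := by
    have := mul_le_mul_of_nonneg_left h2 ha0.le
    calc a * (L - Real.log a) ≤ a * (S / a - 1) := this
      _ = S - a := by field_simp
  nlinarith [h1', h2']

/-- There exists a constant `C > 0` such that for all sufficiently large integers `s` and all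
integers `t` with `1 ≤ t ≤ s`, one has `S(s, t) ≤ C * (s / log s) ^ s`. -/
theorem stmt_10 :
    ∃ C : ℝ, 0 < C ∧ ∃ s₀ : ℕ, ∀ s : ℕ, s₀ ≤ s → ∀ t : ℕ, 1 ≤ t → t ≤ s →
      (stirling2 s t : ℝ) ≤ C * ((s : ℝ) / Real.log s) ^ s := by
  refine ⟨1, one_pos, 2, fun s hs t ht hts => ?_⟩
  rw [one_mul]
  have hS1 : (1 : ℝ) < (s : ℝ) := by exact_mod_cast lt_of_lt_of_le one_lt_two hs
  have hS0 : (0 : ℝ) < (s : ℝ) := lt_trans one_pos hS1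
  have hL : 0 < Real.log s := Real.log_pos hS1
  have ht1 : (1 : ℝ) ≤ (t : ℝ) := by exact_mod_cast ht
  have ht0 : (0 : ℝ) < (t : ℝ) := lt_of_lt_of_le one_pos ht1
  have htsR : (t : ℝ) ≤ (s : ℝ) := by exact_mod_cast hts
  -- Step 1: stirling2 s t ≤ t^s / t!
  have hfac : (0 : ℝ) < (t.factorial : ℝ) := by exact_mod_cast t.factorial_pos
  have step1 : (stirling2 s t : ℝ) ≤ (t : ℝ) ^ s / (t.factorial : ℝ) := by
    rw [le_div_iff₀ hfac]
    have := factorial_mul_stirling2_le s t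
    have : ((t.factorial * stirling2 s t : ℕ) : ℝ) ≤ (((t : ℕ) ^ s : ℕ) : ℝ) := by
      exact_mod_cast this
    push_cast at this
    linarith
  -- Step 2: t^s / t! ≤ exp t * t^(s-t)
  have hexp : (t : ℝ) ^ t / (t.factorial : ℝ) ≤ Real.exp t :=
    Real.pow_div_factorial_le_exp (x := (t : ℝ)) ht0.le t
  have step2 : (t : ℝ) ^ s / (t.factorial : ℝ) ≤ Real.exp t * (t : ℝ) ^ (s - t) := by
    have hsplit : (t : ℝ) ^ s = (t : ℝ) ^ (s - t) * (t : ℝ) ^ t := by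
      rw [← pow_add, Nat.sub_add_cancel hts]
    rw [hsplit, mul_div_assoc]
    calc (t : ℝ) ^ (s - t) * ((t : ℝ) ^ t / (t.factorial : ℝ))
        ≤ (t : ℝ) ^ (s - t) * Real.exp t :=
          mul_le_mul_of_nonneg_left hexp (by positivity)
      _ = Real.exp t * (t : ℝ) ^ (s - t) := mul_comm _ _
  -- Step 3: exp t * t^(s-t) ≤ (s / log s)^s
  have step3 : Real.exp t * (t : ℝ) ^ (s - t) ≤ ((s : ℝ) / Real.log s) ^ s := by
    have hlhs : Real.exp t * (t : ℝ) ^ (s - t)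
        = Real.exp ((t : ℝ) + ((s : ℝ) - (t : ℝ)) * Real.log t) := by
      rw [Real.exp_add]
      congr 1
      have hcast : (s : ℝ) - (t : ℝ) = ((s - t : ℕ) : ℝ) := by
        rw [Nat.cast_sub hts]
      rw [hcast, ← Real.log_pow, Real.exp_log (by positivity)]
    have hrhs : ((s : ℝ) / Real.log s) ^ s
        = Real.exp ((s : ℝ) * (Real.log s - Real.log (Real.log s))) := by
      rw [← Real.log_div (ne_of_gt hS0) (ne_of_gt hL), ← Real.log_pow,
        Real.exp_log (by positivity)]
    rw [hlhs, hrhs]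
    exact Real.exp_le_exp.mpr (key_ineq ht1 hS1)
  exact le_trans step1 (le_trans step2 step3)
end

section
/- Let n ≥ 1 be an integer, let f : ℕ → ℝ be a function with f(m) ≥ 0 for all m ≥ 1, and let y > 0 be a real number such that the series ∑_{m ≥ 1} f(m)·y^m/m! converges to a value S. Then ∑_{π} ∏_{B ∈ π} f(|B|) ≤ n!·y^{−n}·exp(S), where the outer sum ranges over all partitions π of the set {1, …, n} into nonempty blocks and |B| denotes the cardinality of a block B. -/
open Classical

/-- A finset `P` of subsets of `Fin n` is a partition of `{1, …, n}` if its blocks are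
nonempty and every element lies in exactly one block. -/
def IsSetPartition (n : ℕ) (P : Finset (Finset (Fin n))) : Prop :=
  (∀ B ∈ P, B ≠ ∅) ∧ ∀ a : Fin n, ∃! B, B ∈ P ∧ a ∈ B


def OKT (n k : ℕ) (A : Finset (Fin n)) (b : Fin k → Finset (Fin n)) : Prop :=
  (∀ i, b i ≠ ∅) ∧ (∀ i j, i ≠ j → Disjoint (b i) (b j)) ∧ Finset.univ.biUnion b = A

lemma okt_inj {n k : ℕ} {A : Finset (Fin n)} {b : Fin k → Finset (Fin n)}
    (hb : OKT n k A b) : Function.Injective b := by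
  intro i j h
  by_contra hne
  have := hb.2.1 i j hne
  rw [h, disjoint_self] at this
  exact hb.1 j (by simpa using this)

lemma part_disj {n : ℕ} {P : Finset (Finset (Fin n))} (hP : IsSetPartition n P)
    {B C : Finset (Fin n)} (hB : B ∈ P) (hC : C ∈ P) (hne : B ≠ C) : Disjoint B C := by
  rw [Finset.disjoint_left]
  intro x hxB hxC
  obtain ⟨D, -, hD⟩ := hP.2 x
  exact hne ((hD B ⟨hB, hxB⟩).trans (hD C ⟨hC, hxC⟩).symm)

lemma okt_image {n k : ℕ} {b : Fin k → Finset (Fin n)} (hb : OKT n k Finset.univ b) :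
    IsSetPartition n (Finset.image b Finset.univ) ∧ (Finset.image b Finset.univ).card = k := by
  obtain ⟨h1, h2, h3⟩ := hb
  refine ⟨⟨fun B hB => ?_, fun a => ?_⟩, ?_⟩
  · obtain ⟨i, -, rfl⟩ := Finset.mem_image.1 hB
    exact h1 i
  · have : a ∈ Finset.univ.biUnion b := h3 ▸ Finset.mem_univ a
    obtain ⟨i, -, hi⟩ := Finset.mem_biUnion.1 this
    refine ⟨b i, ⟨Finset.mem_image_of_mem b (Finset.mem_univ i), hi⟩, ?_⟩
    rintro C ⟨hC, haC⟩
    obtain ⟨j, -, rfl⟩ := Finset.mem_image.1 hC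
    by_contra hne
    have hji : j ≠ i := fun h => hne (by rw [h])
    exact Finset.disjoint_left.1 (h2 j i hji) haC hi
  · rw [Finset.card_image_of_injective _ (okt_inj ⟨h1, h2, h3⟩), Finset.card_univ,
      Fintype.card_fin]

lemma count_lemma {n k : ℕ} {P : Finset (Finset (Fin n))} (hP : IsSetPartition n P)
    (hcard : P.card = k) :
    (Finset.univ.filter (fun b : Fin k → Finset (Fin n) =>
      OKT n k Finset.univ b ∧ Finset.image b Finset.univ = P)).card = Nat.factorial k := by
  rw [← Fintype.card_subtype]
  have hcard' : Fintype.card {B // B ∈ P} = k := by rw [Fintype.card_coe, hcard]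
  set T := {b : Fin k → Finset (Fin n) //
    OKT n k Finset.univ b ∧ Finset.image b Finset.univ = P} with hT
  have hΦ : ∃ Φ : (Fin k ≃ {B // B ∈ P}) → T, Function.Bijective Φ := by
    refine ⟨fun e => ⟨fun i => (e i).1, ⟨⟨fun i => hP.1 _ (e i).2, fun i j hij => ?_, ?_⟩, ?_⟩⟩, ?_, ?_⟩
    · refine part_disj hP (e i).2 (e j).2 fun h => hij (e.injective (Subtype.ext h))
    · ext a
      simp only [Finset.mem_biUnion, Finset.mem_univ, true_and, iff_true]
      obtain ⟨B, ⟨hB, haB⟩, -⟩ := hP.2 a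
      exact ⟨e.symm ⟨B, hB⟩, by simpa using haB⟩
    · ext B
      simp only [Finset.mem_image, Finset.mem_univ, true_and]
      constructor
      · rintro ⟨i, rfl⟩; exact (e i).2
      · intro hB; exact ⟨e.symm ⟨B, hB⟩, by simp⟩
    · intro e e' h
      refine Equiv.ext fun i => Subtype.ext ?_
      exact congrFun (Subtype.mk_eq_mk.1 h) i
    · rintro ⟨b, hOKT, him⟩
      have hg : Function.Injective (fun i : Fin k => (⟨b i, him ▸ Finset.mem_image_of_mem b (Finset.mem_univ i)⟩ : {B // B ∈ P})) := by
        intro i j h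
        exact okt_inj hOKT (congrArg Subtype.val h)
      have hbij : Function.Bijective (fun i : Fin k => (⟨b i, him ▸ Finset.mem_image_of_mem b (Finset.mem_univ i)⟩ : {B // B ∈ P})) := by
        rw [Fintype.bijective_iff_injective_and_card]
        exact ⟨hg, by simp [hcard']⟩
      exact ⟨Equiv.ofBijective _ hbij, rfl⟩
  obtain ⟨Φ, hΦbij⟩ := hΦ
  rw [← Fintype.card_of_bijective hΦbij,
    Fintype.card_equiv (Fintype.equivOfCardEq (by simp [hcard'])), Fintype.card_fin]


noncomputable def G (t : ℕ → ℝ) (n k : ℕ) (A : Finset (Fin n)) : ℝ :=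
  ∑ b ∈ Finset.univ.filter (OKT n k A), ∏ i, t (b i).card

lemma biUnion_cons {n k : ℕ} (B : Finset (Fin n)) (b : Fin k → Finset (Fin n)) :
    Finset.univ.biUnion (Fin.cons B b) = B ∪ Finset.univ.biUnion b := by
  ext x
  simp only [Finset.mem_biUnion, Finset.mem_univ, true_and, Finset.mem_union, Fin.exists_fin_succ,
    Fin.cons_zero, Fin.cons_succ]

lemma okt_cons {n k : ℕ} {A B : Finset (Fin n)} {b : Fin k → Finset (Fin n)} :
    OKT n (k+1) A (Fin.cons B b) ↔ B ≠ ∅ ∧ B ⊆ A ∧ OKT n k (A \ B) b := by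
  constructor
  · rintro ⟨h1, h2, h3⟩
    rw [biUnion_cons] at h3
    have hBA : B ⊆ A := h3 ▸ Finset.subset_union_left
    have hdisj : ∀ i, Disjoint B (b i) := fun i => by
      simpa using h2 0 i.succ (by simp [Fin.succ_ne_zero, (Fin.succ_ne_zero i).symm])
    refine ⟨by simpa using h1 0, hBA, fun i => by simpa using h1 i.succ,
      fun i j hij => by simpa using h2 i.succ j.succ (by simpa using hij), ?_⟩
    ext x
    simp only [Finset.mem_biUnion, Finset.mem_univ, true_and, Finset.mem_sdiff]
    constructor
    · rintro ⟨i, hi⟩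
      refine ⟨h3 ▸ ?_, fun hxB => Finset.disjoint_left.1 (hdisj i) hxB hi⟩
      exact Finset.mem_union_right _ (Finset.mem_biUnion.2 ⟨i, Finset.mem_univ _, hi⟩)
    · rintro ⟨hxA, hxB⟩
      have := h3 ▸ hxA
      rcases Finset.mem_union.1 this with h | h
      · exact absurd h hxB
      · simpa using Finset.mem_biUnion.1 h
  · rintro ⟨hB, hBA, h1, h2, h3⟩
    have hdisj : ∀ i, Disjoint B (b i) := fun i => by
      have : b i ⊆ A \ B := h3 ▸ Finset.subset_biUnion_of_mem b (Finset.mem_univ i)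
      exact Finset.disjoint_left.2 fun x hxB hxb => (Finset.mem_sdiff.1 (this hxb)).2 hxB
    refine ⟨fun i => ?_, fun i j hij => ?_, ?_⟩
    · refine Fin.cases (by simpa using hB) (fun i => by simpa using h1 i) i
    · induction i using Fin.cases with
      | zero =>
        induction j using Fin.cases with
        | zero => exact absurd rfl hij
        | succ j' => simpa using hdisj j'
      | succ i' =>
        induction j using Fin.cases with
        | zero => simpa using (hdisj i').symm
        | succ j' =>
          have hne : i' ≠ j' := fun h => hij (by rw [h])
          simpa using h2 i' j' hne
    · rw [biUnion_cons, h3, Finset.union_sdiff_of_subset hBA]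

lemma G_succ {n : ℕ} (t : ℕ → ℝ) (ht0 : t 0 = 0) (k : ℕ) (A : Finset (Fin n)) :
    G t n (k+1) A = ∑ B ∈ A.powerset, t B.card * G t n k (A \ B) := by
  have hL : G t n (k+1) A
      = ∑ b : Fin (k+1) → Finset (Fin n),
          if OKT n (k+1) A b then ∏ i, t (b i).card else 0 := by
    rw [G, Finset.sum_filter]
  rw [hL, ← Equiv.sum_comp (Fin.consEquiv (fun _ => Finset (Fin n)))
      (fun b => if OKT n (k+1) A b then ∏ i, t (b i).card else 0), Fintype.sum_prod_type]
  have hR : ∀ B : Finset (Fin n),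
      (∑ b : Fin k → Finset (Fin n),
        if OKT n (k+1) A (Fin.cons B b) then ∏ i, t (((Fin.cons B b : Fin (k+1) → Finset (Fin n))) i).card else 0)
      = if B ⊆ A then t B.card * G t n k (A \ B) else 0 := by
    intro B
    by_cases hBA : B ⊆ A
    · by_cases hB : B = (∅ : Finset (Fin n))
      · subst hB
        simp only [if_pos hBA]
        have : ∀ b : Fin k → Finset (Fin n), ¬ OKT n (k+1) A (Fin.cons ∅ b) := by
          intro b hb
          exact (okt_cons.1 hb).1 rfl
        simp [this, Finset.card_empty, ht0]
      · rw [if_pos hBA]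
        have : ∀ b : Fin k → Finset (Fin n),
            (if OKT n (k+1) A (Fin.cons B b) then ∏ i, t (((Fin.cons B b : Fin (k+1) → Finset (Fin n))) i).card else 0)
            = t B.card * (if OKT n k (A \ B) b then ∏ i, t ((b i).card) else 0) := by
          intro b
          rw [okt_cons]
          by_cases h : OKT n k (A \ B) b
          · rw [if_pos ⟨hB, hBA, h⟩, if_pos h, Fin.prod_univ_succ]
            simp
          · rw [if_neg (by tauto), if_neg h, mul_zero]
        rw [Finset.sum_congr rfl (fun b _ => this b), ← Finset.mul_sum, G, Finset.sum_filter]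
    · rw [if_neg hBA]
      refine Finset.sum_eq_zero fun b _ => ?_
      rw [if_neg (fun h => hBA (okt_cons.1 h).2.1)]
  have hpow : ∑ B ∈ A.powerset, t B.card * G t n k (A \ B)
      = ∑ B : Finset (Fin n), if B ⊆ A then t B.card * G t n k (A \ B) else 0 := by
    have : A.powerset = Finset.univ.filter (fun B => B ⊆ A) := by ext B; simp
    rw [this, Finset.sum_filter]
  rw [hpow]
  exact Finset.sum_congr rfl fun B _ => hR B

lemma G_zero {n : ℕ} (t : ℕ → ℝ) (A : Finset (Fin n)) :
    G t n 0 A = if A = ∅ then 1 else 0 := by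
  rcases eq_or_ne A ∅ with h | h
  · subst h
    rw [if_pos rfl, G]
    have h1 : (Finset.univ.filter (OKT n 0 (∅ : Finset (Fin n)))) = Finset.univ := by
      refine Finset.filter_true_of_mem fun b _ => ?_
      exact ⟨fun i => i.elim0, fun i => i.elim0, by simp⟩
    rw [h1]
    simp
  · rw [if_neg h, G]
    have h1 : (Finset.univ.filter (OKT n 0 A)) = ∅ := by
      rw [Finset.filter_eq_empty_iff]
      rintro b - ⟨-, -, h3⟩
      exact h (by simpa using h3.symm)
    rw [h1, Finset.sum_empty]

lemma G_le {n : ℕ} (t : ℕ → ℝ) (ht0 : t 0 = 0) (htnn : ∀ m, 0 ≤ t m) (S : ℝ) (hS : 0 ≤ S)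
    (hsum : ∀ N : ℕ, ∑ m ∈ Finset.range (N + 1), t m / (Nat.factorial m : ℝ) ≤ S) :
    ∀ (k : ℕ) (A : Finset (Fin n)), G t n k A ≤ (Nat.factorial A.card : ℝ) * S ^ k := by
  intro k
  induction k with
  | zero =>
    intro A
    rw [G_zero]
    split
    · simp only [pow_zero, mul_one]
      exact_mod_cast Nat.one_le_iff_ne_zero.2 (Nat.factorial_ne_zero _)
    · positivity
  | succ k ih =>
    intro A
    rw [G_succ t ht0]
    have key : ∑ B ∈ A.powerset, t B.card * (Nat.factorial (A.card - B.card) : ℝ)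
        ≤ (Nat.factorial A.card : ℝ) * S := by
      have h1 : ∑ B ∈ A.powerset, t B.card * (Nat.factorial (A.card - B.card) : ℝ)
          = ∑ j ∈ Finset.range (A.card + 1),
              (A.card.choose j : ℝ) * (t j * (Nat.factorial (A.card - j) : ℝ)) := by
        rw [Finset.sum_powerset]
        refine Finset.sum_congr rfl fun j hj => ?_
        have hc : ∀ B ∈ Finset.powersetCard j A,
            t B.card * (Nat.factorial (A.card - B.card) : ℝ)
              = t j * (Nat.factorial (A.card - j) : ℝ) := fun B hB => by
          rw [(Finset.mem_powersetCard.1 hB).2]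
        rw [Finset.sum_congr rfl hc, Finset.sum_const, Finset.card_powersetCard, nsmul_eq_mul]
      rw [h1]
      have h2 : ∀ j ∈ Finset.range (A.card + 1),
          (A.card.choose j : ℝ) * (t j * (Nat.factorial (A.card - j) : ℝ))
            = (Nat.factorial A.card : ℝ) * (t j / (Nat.factorial j : ℝ)) := by
        intro j hj
        have hjle : j ≤ A.card := Nat.lt_succ_iff.1 (Finset.mem_range.1 hj)
        have hfact : ((A.card.choose j : ℕ) : ℝ) * (Nat.factorial j : ℝ)
            * (Nat.factorial (A.card - j) : ℝ) = (Nat.factorial A.card : ℝ) := by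
          exact_mod_cast congrArg (Nat.cast (R := ℝ)) (Nat.choose_mul_factorial_mul_factorial hjle)
        have hj0 : (Nat.factorial j : ℝ) ≠ 0 := by positivity
        field_simp
        linear_combination t j * hfact
      rw [Finset.sum_congr rfl h2, ← Finset.mul_sum]
      exact mul_le_mul_of_nonneg_left (hsum A.card) (by positivity)
    calc ∑ B ∈ A.powerset, t B.card * G t n k (A \ B)
        ≤ ∑ B ∈ A.powerset, t B.card * ((Nat.factorial (A.card - B.card) : ℝ) * S ^ k) := by
          refine Finset.sum_le_sum fun B hB => ?_
          have := ih (A \ B)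
          rw [Finset.card_sdiff_of_subset (Finset.mem_powerset.1 hB)] at this
          exact mul_le_mul_of_nonneg_left this (htnn _)
      _ = S ^ k * ∑ B ∈ A.powerset, t B.card * (Nat.factorial (A.card - B.card) : ℝ) := by
          rw [Finset.mul_sum]; exact Finset.sum_congr rfl fun B _ => by ring
      _ ≤ S ^ k * ((Nat.factorial A.card : ℝ) * S) :=
          mul_le_mul_of_nonneg_left key (by positivity)
      _ = (Nat.factorial A.card : ℝ) * S ^ (k + 1) := by ring

lemma part_biUnion {n : ℕ} {P : Finset (Finset (Fin n))} (hP : IsSetPartition n P) :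
    P.biUnion id = Finset.univ := by
  ext a
  simp only [Finset.mem_biUnion, id, Finset.mem_univ, iff_true]
  obtain ⟨B, ⟨hB, haB⟩, -⟩ := hP.2 a
  exact ⟨B, hB, haB⟩

lemma part_sum_card {n : ℕ} {P : Finset (Finset (Fin n))} (hP : IsSetPartition n P) :
    ∑ B ∈ P, B.card = n := by
  have := Finset.card_biUnion (s := P) (t := id)
    (fun B hB C hC hne => part_disj hP hB hC hne)
  rw [part_biUnion hP, Finset.card_univ, Fintype.card_fin] at this
  exact this.symm

lemma part_card_le {n : ℕ} {P : Finset (Finset (Fin n))} (hP : IsSetPartition n P) :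
    P.card ≤ n := by
  calc P.card = ∑ _B ∈ P, 1 := by simp
    _ ≤ ∑ B ∈ P, B.card := Finset.sum_le_sum fun B hB =>
        Nat.one_le_iff_ne_zero.2 (fun h => hP.1 B hB (Finset.card_eq_zero.1 h))
    _ = n := part_sum_card hP

lemma G_univ_eq {n : ℕ} (t : ℕ → ℝ) (k : ℕ) :
    G t n k Finset.univ
      = ∑ P ∈ (Finset.univ.filter (IsSetPartition n)).filter (fun P => P.card = k),
          (Nat.factorial k : ℝ) * ∏ B ∈ P, t B.card := by
  rw [G, ← Finset.sum_fiberwise_of_maps_to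
    (g := fun b : Fin k → Finset (Fin n) => Finset.image b Finset.univ)
    (t := (Finset.univ.filter (IsSetPartition n)).filter (fun P => P.card = k))
    (fun b hb => by
      have h := okt_image (Finset.mem_filter.1 hb).2
      exact Finset.mem_filter.2 ⟨Finset.mem_filter.2 ⟨Finset.mem_univ _, h.1⟩, h.2⟩)
    (fun b => ∏ i, t (b i).card)]
  refine Finset.sum_congr rfl fun P hP => ?_
  obtain ⟨hP1, hP2⟩ := Finset.mem_filter.1 hP
  have hPpart : IsSetPartition n P := (Finset.mem_filter.1 hP1).2
  rw [Finset.filter_filter]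
  have hconst : ∀ b ∈ Finset.univ.filter (fun b : Fin k → Finset (Fin n) =>
      OKT n k Finset.univ b ∧ Finset.image b Finset.univ = P),
      (∏ i, t (b i).card) = ∏ B ∈ P, t B.card := by
    intro b hb
    obtain ⟨hOKT, him⟩ := (Finset.mem_filter.1 hb).2
    rw [← him, Finset.prod_image (fun i _ j _ h => okt_inj hOKT h)]
  rw [Finset.sum_congr rfl hconst, Finset.sum_const, count_lemma hPpart hP2, nsmul_eq_mul]

/-- Let `n ≥ 1`, let `f : ℕ → ℝ` be nonnegative on positive integers, and let `y > 0` be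
such that `∑_{m ≥ 1} f(m) y^m / m!` converges to `S`. Then
`∑_π ∏_{B ∈ π} f(|B|) ≤ n! * y^(-n) * exp S`, the sum being over all partitions `π` of
`{1, …, n}`. -/
theorem stmt_11 (n : ℕ) (hn : 1 ≤ n) (f : ℕ → ℝ) (hf : ∀ m : ℕ, 1 ≤ m → 0 ≤ f m)
    (y : ℝ) (hy : 0 < y) (S : ℝ)
    (hS : HasSum (fun m : ℕ => f (m + 1) * y ^ (m + 1) / (Nat.factorial (m + 1) : ℝ)) S) :
    (∑ P ∈ Finset.univ.filter (IsSetPartition n), ∏ B ∈ P, f B.card)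
      ≤ (Nat.factorial n : ℝ) * y ^ (-(n : ℤ)) * Real.exp S := by
  set t : ℕ → ℝ := fun m => if m = 0 then 0 else f m * y ^ m with ht
  have htnn : ∀ m, 0 ≤ t m := by
    intro m
    rcases Nat.eq_zero_or_pos m with h | h
    · simp [ht, h]
    · simp only [ht, if_neg (Nat.pos_iff_ne_zero.1 h)]
      exact mul_nonneg (hf m h) (le_of_lt (pow_pos hy m))
  have hterm_nn : ∀ m : ℕ, 0 ≤ f (m + 1) * y ^ (m + 1) / (Nat.factorial (m + 1) : ℝ) := by
    intro m
    have := hf (m + 1) (Nat.le_add_left 1 m)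
    positivity
  have hS0 : 0 ≤ S := by
    simpa using sum_le_hasSum ∅ (fun i _ => hterm_nn i) hS
  have hsum : ∀ N : ℕ, ∑ m ∈ Finset.range (N + 1), t m / (Nat.factorial m : ℝ) ≤ S := by
    intro N
    rw [Finset.sum_range_succ']
    simp only [ht, if_pos rfl, Nat.factorial_zero, Nat.cast_one, zero_div, add_zero]
    have : ∀ i : ℕ, (if i + 1 = 0 then (0:ℝ) else f (i+1) * y ^ (i+1)) / (Nat.factorial (i+1) : ℝ)
        = f (i + 1) * y ^ (i + 1) / (Nat.factorial (i + 1) : ℝ) := by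
      intro i; rw [if_neg (Nat.succ_ne_zero i)]
    rw [Finset.sum_congr rfl fun i _ => this i]
    exact sum_le_hasSum _ (fun i _ => hterm_nn i) hS
  have main : ∑ P ∈ Finset.univ.filter (IsSetPartition n), ∏ B ∈ P, t B.card
      ≤ (Nat.factorial n : ℝ) * Real.exp S := by
    rw [← Finset.sum_fiberwise_of_maps_to
      (g := fun P : Finset (Finset (Fin n)) => P.card)
      (t := Finset.range (n + 1))
      (fun P hP => Finset.mem_range.2
        (Nat.lt_succ_of_le (part_card_le (Finset.mem_filter.1 hP).2)))
      (fun P => ∏ B ∈ P, t B.card)]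
    have hk : ∀ k ∈ Finset.range (n + 1),
        ∑ P ∈ (Finset.univ.filter (IsSetPartition n)).filter (fun P => P.card = k),
          ∏ B ∈ P, t B.card ≤ (Nat.factorial n : ℝ) * (S ^ k / (Nat.factorial k : ℝ)) := by
      intro k hk
      have hfk : (0:ℝ) < (Nat.factorial k : ℝ) := by positivity
      rw [← mul_le_mul_iff_right₀ hfk]
      have h1 : (Nat.factorial k : ℝ) * ∑ P ∈ (Finset.univ.filter (IsSetPartition n)).filter
          (fun P => P.card = k), ∏ B ∈ P, t B.card = G t n k Finset.univ := by
        rw [G_univ_eq, Finset.mul_sum]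
      rw [h1]
      have h2 := G_le (n := n) t (by simp [ht]) htnn S hS0 hsum k Finset.univ
      rw [Finset.card_univ, Fintype.card_fin] at h2
      calc G t n k Finset.univ ≤ (Nat.factorial n : ℝ) * S ^ k := h2
        _ = (Nat.factorial k : ℝ) * ((Nat.factorial n : ℝ) * (S ^ k / (Nat.factorial k : ℝ))) := by
          field_simp
    calc ∑ k ∈ Finset.range (n + 1), ∑ P ∈ (Finset.univ.filter (IsSetPartition n)).filter
          (fun P => P.card = k), ∏ B ∈ P, t B.card
        ≤ ∑ k ∈ Finset.range (n + 1), (Nat.factorial n : ℝ) * (S ^ k / (Nat.factorial k : ℝ)) :=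
          Finset.sum_le_sum hk
      _ = (Nat.factorial n : ℝ) * ∑ k ∈ Finset.range (n + 1), S ^ k / (Nat.factorial k : ℝ) := by
          rw [Finset.mul_sum]
      _ ≤ (Nat.factorial n : ℝ) * Real.exp S := by
          refine mul_le_mul_of_nonneg_left (Real.sum_le_exp_of_nonneg hS0 (n + 1)) (by positivity)
  have key1 : ∀ P ∈ Finset.univ.filter (IsSetPartition n),
      (∏ B ∈ P, f B.card) * y ^ n = ∏ B ∈ P, t B.card := by
    intro P hP
    have hPpart : IsSetPartition n P := (Finset.mem_filter.1 hP).2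
    have : ∀ B ∈ P, t B.card = f B.card * y ^ B.card := by
      intro B hB
      rw [ht]
      simp only
      rw [if_neg (fun h => hPpart.1 B hB (Finset.card_eq_zero.1 h))]
    rw [Finset.prod_congr rfl this, Finset.prod_mul_distrib, Finset.prod_pow_eq_pow_sum,
      part_sum_card hPpart]
  have hyn : (0:ℝ) < y ^ n := pow_pos hy n
  rw [zpow_neg, zpow_natCast,
    show (Nat.factorial n : ℝ) * (y ^ n)⁻¹ * Real.exp S
      = ((Nat.factorial n : ℝ) * Real.exp S) / y ^ n by ring,
    le_div_iff₀ hyn]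
  calc (∑ P ∈ Finset.univ.filter (IsSetPartition n), ∏ B ∈ P, f B.card) * y ^ n
      = ∑ P ∈ Finset.univ.filter (IsSetPartition n), ∏ B ∈ P, t B.card := by
        rw [Finset.sum_mul]
        exact Finset.sum_congr rfl key1
    _ ≤ (Nat.factorial n : ℝ) * Real.exp S := main
end

section
/- Let f : ℝ → ℝ be a function with f(n) → ∞ as n → ∞ and f(n) ≥ 1 for all sufficiently large n, and suppose f is smooth with |f^{(j)}(u)| ≤ C_j·u^{−j} for each j ≥ 1 and all sufficiently large u. Let (X_n)_{n ≥ N} be a sequence of independent Bernoulli random variables with P(X_n = 1) = 1/f(n). Then almost surely, for every real λ > 1 there are only finitely many integers n ≥ N for which X_m = 0 for all integers m with n < m ≤ n + λ·f(n)·log n; equivalently, if S₁ < S₂ < ⋯ enumerate the indices n with X_n = 1, then almost surely limsup_{k→∞} (S_{k+1} − S_k)/(f(S_k)·log S_k) ≤ 1. -/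
open MeasureTheory ProbabilityTheory Filter

set_option maxHeartbeats 2000000 in
theorem key_lemma {Ω : Type*} [MeasurableSpace Ω] (μ : Measure Ω) [IsProbabilityMeasure μ]
    (f : ℝ → ℝ)
    (hf_one : ∀ᶠ u in atTop, 1 ≤ f u)
    (hf_smooth : ContDiff ℝ (⊤ : ℕ∞) f)
    (C : ℕ → ℝ)
    (hf_deriv : ∀ j : ℕ, 1 ≤ j → ∀ᶠ u in atTop, |iteratedDeriv j f u| ≤ C j * u ^ (-(j : ℝ)))
    (N : ℕ) (X : ℕ → Ω → ℕ)
    (hX_meas : ∀ n, Measurable (X n))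
    (hX_val : ∀ n, N ≤ n → ∀ ω, X n ω = 0 ∨ X n ω = 1)
    (hX_indep : iIndepFun X μ)
    (hX_p : ∀ n, N ≤ n → μ {ω | X n ω = 1} = ENNReal.ofReal (1 / f n))
    (lam : ℝ) (hlam : 1 < lam) :
    ∀ᵐ ω ∂μ,
      {n : ℕ | N ≤ n ∧ ∀ m : ℕ, n < m → (m : ℝ) ≤ (n : ℝ) + lam * f n * Real.log n →
        X m ω = 0}.Finite := by
  classical
  -- constants
  obtain ⟨u₀, hu₀⟩ := eventually_atTop.1 hf_one
  obtain ⟨u₁, hu₁⟩ := eventually_atTop.1 (hf_deriv 1 le_rfl)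
  -- simplified derivative bound
  have hu₁' : ∀ u : ℝ, max u₁ 1 ≤ u → |deriv f u| ≤ C 1 * u⁻¹ := by
    intro u hu
    have h1 : u₁ ≤ u := le_trans (le_max_left _ _) hu
    have := hu₁ u h1
    rwa [iteratedDeriv_one, Nat.cast_one, Real.rpow_neg_one] at this
  have hC1 : 0 ≤ C 1 := by
    have h := hu₁' (max u₁ 1) le_rfl
    have hpos : 0 < (max u₁ 1 : ℝ)⁻¹ := by
      have h1 : (0:ℝ) < max u₁ 1 := lt_of_lt_of_le one_pos (le_max_right _ _)
      positivity
    nlinarith [abs_nonneg (deriv f (max u₁ 1))]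
  set δ : ℝ := (lam - 1) / 2 with hδdef
  have hδ : 0 < δ := by simp only [hδdef]; linarith
  set c : ℝ := lam / (1 + δ) with hcdef
  have hc : 1 < c := by
    rw [hcdef, lt_div_iff₀ (by linarith)]
    simp only [hδdef]; linarith
  -- threshold n₂
  have hlogdiv : Tendsto (fun n : ℕ => Real.log n / n) atTop (nhds 0) := by
    have h0 : Tendsto (fun x : ℝ => Real.log x / x) atTop (nhds 0) := by
      simpa [Function.comp] using
        Real.isLittleO_log_id_atTop.tendsto_div_nhds_zero
    exact h0.comp tendsto_natCast_atTop_atTop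
  have hev : ∀ᶠ n : ℕ in atTop,
      u₀ ≤ (n:ℝ) ∧ max u₁ 1 ≤ (n:ℝ) ∧ 1 ≤ n ∧ N ≤ n ∧ C 1 * lam * (Real.log n / n) ≤ δ := by
    have h1 : ∀ᶠ n : ℕ in atTop, u₀ ≤ (n:ℝ) :=
      tendsto_natCast_atTop_atTop.eventually_ge_atTop u₀
    have h2 : ∀ᶠ n : ℕ in atTop, max u₁ 1 ≤ (n:ℝ) :=
      tendsto_natCast_atTop_atTop.eventually_ge_atTop _
    have h5 : ∀ᶠ n : ℕ in atTop, C 1 * lam * (Real.log n / n) ≤ δ := by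
      have ht : Tendsto (fun n : ℕ => C 1 * lam * (Real.log n / n)) atTop (nhds 0) := by
        simpa using hlogdiv.const_mul (C 1 * lam)
      exact ht.eventually (eventually_le_nhds hδ)
    filter_upwards [h1, h2, eventually_ge_atTop 1, eventually_ge_atTop N, h5] with n a b c' d e
    exact ⟨a, b, c', d, e⟩
  obtain ⟨n₂, hn₂⟩ := eventually_atTop.1 hev
  -- basic facts for n ≥ n₂
  have hbasic : ∀ n : ℕ, n₂ ≤ n →
      1 ≤ f n ∧ 0 ≤ Real.log n ∧ (1:ℝ) ≤ n ∧ N ≤ n ∧ max u₁ 1 ≤ (n:ℝ) ∧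
        C 1 * lam * (Real.log n / n) ≤ δ := by
    intro n hn
    obtain ⟨a, b, c', d, e⟩ := hn₂ n hn
    have h1n : (1:ℝ) ≤ n := by exact_mod_cast c'
    exact ⟨hu₀ n a, Real.log_nonneg h1n, h1n, d, b, e⟩
  set M : ℕ → ℕ := fun n => ⌊(n:ℝ) + lam * f n * Real.log n⌋₊ with hMdef
  set A : ℕ → Set Ω := fun n =>
    if n < n₂ then ∅ else ⋂ m ∈ Finset.Ioc n (M n), {ω | X m ω = 0} with hAdef
  -- window facts
  have hwindow : ∀ n : ℕ, n₂ ≤ n →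
      0 ≤ lam * f n * Real.log n ∧ (M n : ℝ) ≤ (n:ℝ) + lam * f n * Real.log n ∧ n ≤ M n := by
    intro n hn
    obtain ⟨hf1, hlog, h1n, -, -, -⟩ := hbasic n hn
    have hnn : 0 ≤ lam * f n * Real.log n :=
      mul_nonneg (mul_nonneg (by linarith) (by linarith)) hlog
    have hge : 0 ≤ (n:ℝ) + lam * f n * Real.log n := by linarith
    refine ⟨hnn, Nat.floor_le hge, Nat.le_floor ?_⟩
    push_cast; linarith
  -- f on the window
  have hfwin : ∀ n : ℕ, n₂ ≤ n → ∀ m : ℕ, m ∈ Finset.Ioc n (M n) →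
      1 ≤ f m ∧ f m ≤ f n * (1 + δ) := by
    intro n hn m hm
    obtain ⟨hf1, hlog, h1n, hNn, hu1n, hsmall⟩ := hbasic n hn
    obtain ⟨hnn, hMle, hnM⟩ := hwindow n hn
    rw [Finset.mem_Ioc] at hm
    have hnm : (n:ℝ) ≤ (m:ℝ) := by exact_mod_cast hm.1.le
    have hmMn : (m:ℝ) ≤ (M n : ℝ) := by exact_mod_cast hm.2
    have hmub : (m:ℝ) ≤ (n:ℝ) + lam * f n * Real.log n := le_trans hmMn hMle
    have hum : u₀ ≤ (m:ℝ) := le_trans (hn₂ n hn).1 hnm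
    have hfm1 : 1 ≤ f m := hu₀ m hum
    have hnpos : (0:ℝ) < n := by linarith
    -- derivative bound on [n, m]
    have hbound : |f m - f n| ≤ C 1 / n * ((m:ℝ) - n) := by
      have h := Convex.norm_image_sub_le_of_norm_deriv_le (s := Set.Icc (n:ℝ) (m:ℝ))
        (f := f) (C := C 1 / n)
        (fun x _ => (hf_smooth.differentiable (by simp)).differentiableAt)
        (fun x hx => by
          have hx1 : (n:ℝ) ≤ x := hx.1
          have hxu : max u₁ 1 ≤ x := le_trans hu1n hx1
          have h2 := hu₁' x hxu
          have hxpos : 0 < x := lt_of_lt_of_le hnpos hx1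
          have : C 1 * x⁻¹ ≤ C 1 * (n:ℝ)⁻¹ :=
            mul_le_mul_of_nonneg_left (by
              exact inv_anti₀ hnpos hx1) hC1
          calc ‖deriv f x‖ ≤ C 1 * x⁻¹ := h2
            _ ≤ C 1 * (n:ℝ)⁻¹ := this
            _ = C 1 / n := by ring)
        (convex_Icc _ _) (Set.left_mem_Icc.2 hnm) (Set.right_mem_Icc.2 hnm)
      have : ‖(m:ℝ) - n‖ = (m:ℝ) - n := by
        rw [Real.norm_eq_abs, abs_of_nonneg (by linarith)]
      rwa [Real.norm_eq_abs, this] at h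
    have h2 : f m - f n ≤ C 1 / n * ((m:ℝ) - n) := le_trans (le_abs_self _) hbound
    have h3 : C 1 / n * ((m:ℝ) - n) ≤ C 1 / n * (lam * f n * Real.log n) :=
      mul_le_mul_of_nonneg_left (by linarith) (by positivity)
    have h4 : C 1 / n * (lam * f n * Real.log n) = (C 1 * lam * (Real.log n / n)) * f n := by
      field_simp
    have h5 : (C 1 * lam * (Real.log n / n)) * f n ≤ δ * f n :=
      mul_le_mul_of_nonneg_right hsmall (by linarith)
    refine ⟨hfm1, ?_⟩
    nlinarith
  -- measure of individual sets
  have hmeas0 : ∀ m : ℕ, N ≤ m → 1 ≤ f m →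
      μ {ω | X m ω = 0} = ENNReal.ofReal (1 - 1 / f m) := by
    intro m hNm hfm
    have hset : {ω | X m ω = 0} = {ω | X m ω = 1}ᶜ := by
      ext ω
      rcases hX_val m hNm ω with h | h <;> simp [h]
    have hms : MeasurableSet {ω | X m ω = 1} := hX_meas m (measurableSet_singleton 1)
    have hfmpos : (0:ℝ) < f m := by linarith
    have hle1 : 1 / f m ≤ 1 := by
      rw [div_le_one hfmpos]; linarith
    rw [hset, prob_compl_eq_one_sub hms, hX_p m hNm,
      ← ENNReal.ofReal_one, ← ENNReal.ofReal_sub _ (by positivity)]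
  -- measure of A n bounded
  have hAbound : ∀ n : ℕ, μ (A n) ≤ ENNReal.ofReal (Real.exp 1 * (n:ℝ) ^ (-c)) := by
    intro n
    by_cases hn : n < n₂
    · simp [hAdef, hn]
    push_neg at hn
    obtain ⟨hf1, hlog, h1n, hNn, hu1n, hsmall⟩ := hbasic n hn
    obtain ⟨hnn, hMle, hnM⟩ := hwindow n hn
    have hnpos : (0:ℝ) < n := by linarith
    have hAeq : A n = ⋂ m ∈ Finset.Ioc n (M n), {ω | X m ω = 0} := by
      simp [hAdef, not_lt.2 hn]
    have hNm : ∀ m ∈ Finset.Ioc n (M n), N ≤ m := by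
      intro m hm
      rw [Finset.mem_Ioc] at hm
      omega
    have hprod : μ (A n) = ∏ m ∈ Finset.Ioc n (M n), μ {ω | X m ω = 0} := by
      rw [hAeq]
      exact hX_indep.meas_biInter (fun m _ =>
        ⟨{0}, measurableSet_singleton 0, rfl⟩)
    have hterm : ∀ m ∈ Finset.Ioc n (M n),
        μ {ω | X m ω = 0} = ENNReal.ofReal (1 - 1 / f m) := by
      intro m hm
      exact hmeas0 m (hNm m hm) (hfwin n hn m hm).1
    rw [hprod, Finset.prod_congr rfl hterm, ← ENNReal.ofReal_prod_of_nonneg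
      (fun m hm => by
        have := (hfwin n hn m hm).1
        have hpos : (0:ℝ) < f m := by linarith
        have : 1 / f m ≤ 1 := by rw [div_le_one hpos]; linarith
        linarith)]
    apply ENNReal.ofReal_le_ofReal
    -- real-number estimate
    have hF : 0 < f n := by linarith
    have hstep1 : ∏ m ∈ Finset.Ioc n (M n), (1 - 1 / f m)
        ≤ ∏ m ∈ Finset.Ioc n (M n), Real.exp (-(1 / f m)) := by
      apply Finset.prod_le_prod
      · intro m hm
        have := (hfwin n hn m hm).1
        have hpos : (0:ℝ) < f m := by linarith
        have : 1 / f m ≤ 1 := by rw [div_le_one hpos]; linarith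
        linarith
      · intro m hm
        have := Real.add_one_le_exp (-(1 / f m))
        linarith
    have hstep2 : ∏ m ∈ Finset.Ioc n (M n), Real.exp (-(1 / f m))
        = Real.exp (∑ m ∈ Finset.Ioc n (M n), -(1 / f m)) := (Real.exp_sum _ _).symm
    -- sum lower bound
    have hcard : (Finset.Ioc n (M n)).card = M n - n := Nat.card_Ioc n (M n)
    have hcardR : ((Finset.Ioc n (M n)).card : ℝ) = (M n : ℝ) - n := by
      rw [hcard]; push_cast [Nat.cast_sub hnM]; ring
    have hMlb : (n:ℝ) + lam * f n * Real.log n - 1 < (M n : ℝ) :=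
      Nat.sub_one_lt_floor _
    have hsumlb : ((M n : ℝ) - n) * (1 / (f n * (1 + δ)))
        ≤ ∑ m ∈ Finset.Ioc n (M n), 1 / f m := by
      have := Finset.card_nsmul_le_sum (Finset.Ioc n (M n)) (fun m => 1 / f m)
        (1 / (f n * (1 + δ))) (fun m hm => by
          obtain ⟨h1, h2⟩ := hfwin n hn m hm
          have hpos : (0:ℝ) < f m := by linarith
          apply one_div_le_one_div_of_le hpos h2)
      rwa [nsmul_eq_mul, hcardR] at this
    have hkey : c * Real.log n - 1 ≤ ∑ m ∈ Finset.Ioc n (M n), 1 / f m := by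
      refine le_trans ?_ hsumlb
      have hD : (0:ℝ) < f n * (1 + δ) := by positivity
      have h1 : (lam * f n * Real.log n - 1) * (1 / (f n * (1 + δ)))
          ≤ ((M n : ℝ) - n) * (1 / (f n * (1 + δ))) := by
        apply mul_le_mul_of_nonneg_right (by linarith) (by positivity)
      refine le_trans ?_ h1
      rw [mul_one_div, le_div_iff₀ hD]
      have hcD : c * (1 + δ) = lam := by
        rw [hcdef]; exact div_mul_cancel₀ _ (ne_of_gt (by linarith))
      have hfD : 1 ≤ f n * (1 + δ) := by nlinarith
      have hexp : (c * Real.log n - 1) * (f n * (1 + δ))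
          = lam * f n * Real.log n - f n * (1 + δ) := by
        rw [← hcD]; ring
      rw [hexp]
      linarith
    have hstep3 : Real.exp (∑ m ∈ Finset.Ioc n (M n), -(1 / f m))
        ≤ Real.exp (1 - c * Real.log n) := by
      apply Real.exp_le_exp.2
      rw [Finset.sum_neg_distrib]
      linarith
    have hstep4 : Real.exp (1 - c * Real.log n) = Real.exp 1 * (n:ℝ) ^ (-c) := by
      rw [Real.rpow_def_of_pos hnpos, sub_eq_add_neg, Real.exp_add]
      ring_nf
    calc ∏ m ∈ Finset.Ioc n (M n), (1 - 1 / f m)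
        ≤ Real.exp (∑ m ∈ Finset.Ioc n (M n), -(1 / f m)) := by rw [← hstep2]; exact hstep1
      _ ≤ Real.exp (1 - c * Real.log n) := hstep3
      _ = Real.exp 1 * (n:ℝ) ^ (-c) := hstep4
  -- summability
  have hsum : (∑' n, μ (A n)) ≠ ⊤ := by
    have hsummable : Summable (fun n : ℕ => Real.exp 1 * (n:ℝ) ^ (-c)) :=
      (Real.summable_nat_rpow.2 (by linarith)).mul_left _
    have hnonneg : ∀ n : ℕ, 0 ≤ Real.exp 1 * (n:ℝ) ^ (-c) := fun n => by positivity
    apply ne_top_of_lt (b := (⊤ : ENNReal))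
    calc (∑' n, μ (A n)) ≤ ∑' n : ℕ, ENNReal.ofReal (Real.exp 1 * (n:ℝ) ^ (-c)) :=
        ENNReal.tsum_le_tsum hAbound
      _ = ENNReal.ofReal (∑' n : ℕ, Real.exp 1 * (n:ℝ) ^ (-c)) :=
        (ENNReal.ofReal_tsum_of_nonneg hnonneg hsummable).symm
      _ < ⊤ := ENNReal.ofReal_lt_top
  -- Borel-Cantelli
  filter_upwards [ae_eventually_notMem hsum] with ω hω
  obtain ⟨n₃, hn₃⟩ := eventually_atTop.1 hω
  apply Set.Finite.subset (Set.finite_lt_nat (max n₂ n₃))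
  intro n hn
  by_contra hlt
  have hlt' : max n₂ n₃ ≤ n := by
    simpa [Set.mem_setOf_eq, not_lt] using hlt
  have hn2 : n₂ ≤ n := le_trans (le_max_left _ _) hlt'
  have hn3 : n₃ ≤ n := le_trans (le_max_right _ _) hlt'
  obtain ⟨hnn, hMle, hnM⟩ := hwindow n hn2
  apply hn₃ n hn3
  have : A n = ⋂ m ∈ Finset.Ioc n (M n), {ω | X m ω = 0} := by
    simp [hAdef, not_lt.2 hn2]
  rw [this]
  simp only [Set.mem_iInter, Set.mem_setOf_eq]
  intro m hm
  rw [Finset.mem_Ioc] at hm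
  exact hn.2 m hm.1 (le_trans (by exact_mod_cast Nat.cast_le.2 hm.2) hMle)

/-- Let `f : ℝ → ℝ` tend to infinity, with `f ≥ 1` eventually, `f` smooth with
`|f^(j)(u)| ≤ C_j * u^(-j)` for each `j ≥ 1` and all large `u`. Let `(X_n)_{n ≥ N}` be
independent Bernoulli random variables with `P(X_n = 1) = 1 / f n`. Then almost surely,
for every `λ > 1` there are only finitely many `n ≥ N` such that `X_m = 0` for all
integers `m` with `n < m ≤ n + λ * f n * log n`. -/
theorem stmt_12 {Ω : Type*} [MeasurableSpace Ω] (μ : Measure Ω) [IsProbabilityMeasure μ]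
    (f : ℝ → ℝ) (hf_tendsto : Tendsto f atTop atTop)
    (hf_one : ∀ᶠ u in atTop, 1 ≤ f u)
    (hf_smooth : ContDiff ℝ (⊤ : ℕ∞) f)
    (C : ℕ → ℝ)
    (hf_deriv : ∀ j : ℕ, 1 ≤ j → ∀ᶠ u in atTop, |iteratedDeriv j f u| ≤ C j * u ^ (-(j : ℝ)))
    (N : ℕ) (X : ℕ → Ω → ℕ)
    (hX_meas : ∀ n, Measurable (X n))
    (hX_val : ∀ n, N ≤ n → ∀ ω, X n ω = 0 ∨ X n ω = 1)
    (hX_indep : iIndepFun X μ)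
    (hX_p : ∀ n, N ≤ n → μ {ω | X n ω = 1} = ENNReal.ofReal (1 / f n)) :
    ∀ᵐ ω ∂μ, ∀ lam : ℝ, 1 < lam →
      {n : ℕ | N ≤ n ∧ ∀ m : ℕ, n < m → (m : ℝ) ≤ (n : ℝ) + lam * f n * Real.log n →
        X m ω = 0}.Finite := by
  obtain ⟨u₀, hu₀⟩ := eventually_atTop.1 hf_one
  obtain ⟨n₀, hn₀⟩ : ∃ n₀ : ℕ, ∀ n : ℕ, n₀ ≤ n → 1 ≤ f n ∧ 0 ≤ Real.log n := by
    obtain ⟨n₀, h⟩ := eventually_atTop.1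
      ((tendsto_natCast_atTop_atTop.eventually_ge_atTop u₀).and (eventually_ge_atTop 1))
    exact ⟨n₀, fun n hn => ⟨hu₀ n (h n hn).1,
      Real.log_nonneg (by exact_mod_cast (h n hn).2)⟩⟩
  have hkey : ∀ k : ℕ, ∀ᵐ ω ∂μ, {n : ℕ | N ≤ n ∧ ∀ m : ℕ, n < m →
      (m : ℝ) ≤ (n : ℝ) + (1 + 1/((k:ℝ)+1)) * f n * Real.log n → X m ω = 0}.Finite :=
    fun k => key_lemma μ f hf_one hf_smooth C hf_deriv N X hX_meas hX_val hX_indep hX_p _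
      (lt_add_of_pos_right _ (by positivity))
  filter_upwards [ae_all_iff.2 hkey] with ω hω lam hlam
  obtain ⟨k, hk⟩ := exists_nat_one_div_lt (sub_pos.2 hlam)
  apply Set.Finite.subset ((hω k).union (Set.finite_lt_nat n₀))
  intro n hn
  by_cases h : n < n₀
  · exact Or.inr h
  · push_neg at h
    left
    refine ⟨hn.1, fun m hm hm' => hn.2 m hm ?_⟩
    obtain ⟨hf1, hlog⟩ := hn₀ n h
    have hfl : 0 ≤ f n * Real.log n := mul_nonneg (by linarith) hlog
    have hle : (1 + 1/((k:ℝ)+1)) * f n * Real.log n ≤ lam * f n * Real.log n := by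
      have : (1 + 1/((k:ℝ)+1)) ≤ lam := by linarith
      nlinarith
    linarith
end

section
/- Assume the following hypothesis: there exist constants C₀ ≥ 1 and d with 1 ≤ d < C₀ such that for all sufficiently large real x there exists an integer n with x − (log(x/2))^d < n ≤ x and ω(n) ≥ C₀·(log log n)/(log log log n). Then there exist δ > 0 and a positive integer K₀ such that for every sufficiently large positive integer n there exists an integer k with K₀ ≤ k < n and ω(n−k) > (1+δ)·(log k)/(log log k). -/
set_option maxHeartbeats 1000000

open Filter

/-- Assume: there exist constants `C₀ ≥ 1` and `d` with `1 ≤ d < C₀` such that for all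
sufficiently large real `x` there is an integer `n` with `x - (log(x/2))^d < n ≤ x` and
`ω(n) ≥ C₀ * log log n / log log log n`. Then there exist `δ > 0` and a positive integer
`K₀` such that for every sufficiently large positive integer `n` there is an integer `k`
with `K₀ ≤ k < n` and `ω(n-k) > (1+δ) * log k / log log k`. -/
theorem stmt_14
    (hyp : ∃ C₀ d : ℝ, 1 ≤ C₀ ∧ 1 ≤ d ∧ d < C₀ ∧
      ∀ᶠ x : ℝ in atTop, ∃ n : ℕ,
        x - Real.log (x / 2) ^ d < (n : ℝ) ∧ (n : ℝ) ≤ x ∧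
        C₀ * Real.log (Real.log n) / Real.log (Real.log (Real.log n))
          ≤ (n.primeFactors.card : ℝ)) :
    ∃ δ : ℝ, 0 < δ ∧ ∃ K₀ : ℕ, 0 < K₀ ∧ ∀ᶠ n : ℕ in atTop, ∃ k : ℕ,
      K₀ ≤ k ∧ k < n ∧
      (1 + δ) * Real.log k / Real.log (Real.log k) < ((n - k).primeFactors.card : ℝ) := by
  obtain ⟨C₀, d, hC₀, hd1, hdC, hev⟩ := hyp
  have hd0 : (0:ℝ) < d := lt_of_lt_of_le one_pos hd1
  have hC₀0 : (0:ℝ) < C₀ := lt_of_lt_of_le one_pos hC₀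
  set θ : ℝ := (C₀ + d) / (2 * C₀) with hθdef
  set δ : ℝ := (C₀ - d) / (4 * d) with hδdef
  have hδ : 0 < δ := div_pos (by linarith) (by linarith)
  have hθ0 : 0 < θ := div_pos (by linarith) (by linarith)
  have hθ1 : θ < 1 := by
    rw [hθdef, div_lt_one (by linarith)]; linarith
  have key : (1 + δ) * d < C₀ * θ := by
    have h1 : C₀ * θ = (C₀ + d) / 2 := by field_simp [hθdef]; rw [hθdef]; field_simp
    have h2 : (1 + δ) * d = d + (C₀ - d) / 4 := by field_simp [hδdef]; rw [hδdef]; field_simp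
    rw [h1, h2]; linarith
  -- the constant c = log log 16 > 0
  set c : ℝ := Real.log (Real.log 16) with hcdef
  have hlog16 : 1 < Real.log 16 := by
    rw [Real.lt_log_iff_exp_lt (by norm_num)]
    exact lt_of_lt_of_le Real.exp_one_lt_d9 (by norm_num)
  have hc : 0 < c := Real.log_pos hlog16
  refine ⟨δ, hδ, 16, by norm_num, ?_⟩
  -- tendsto facts
  have hcast : Tendsto (fun n : ℕ => (n : ℝ)) atTop atTop := tendsto_natCast_atTop_atTop
  have hlogt : Tendsto (fun n : ℕ => Real.log n) atTop atTop :=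
    Real.tendsto_log_atTop.comp hcast
  have hLt : Tendsto (fun n : ℕ => Real.log (Real.log n)) atTop atTop :=
    Real.tendsto_log_atTop.comp hlogt
  have hhalf : Tendsto (fun n : ℕ => Real.log (Real.log ((n : ℝ) / 2))) atTop atTop :=
    Real.tendsto_log_atTop.comp (Real.tendsto_log_atTop.comp (hcast.atTop_div_const (by norm_num)))
  rw [eventually_atTop] at hev
  obtain ⟨x₀, hx₀⟩ := hev
  -- eventual fact EA (case A)
  have hEA : ∀ᶠ L : ℝ in atTop, (1 + δ) * L ^ θ * Real.log L < C₀ * (L - 1) * c := by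
    have hlo := isLittleO_log_rpow_atTop (show (0:ℝ) < 1 - θ by linarith)
    have hb := hlo.def (show (0:ℝ) < c * C₀ / (4 * (1 + δ)) by positivity)
    filter_upwards [hb, eventually_ge_atTop (2:ℝ)] with L hb hL2
    have hL0 : (0:ℝ) < L := by linarith
    have hlogL0 : 0 ≤ Real.log L := Real.log_nonneg (by linarith)
    rw [Real.norm_eq_abs, Real.norm_eq_abs, abs_of_nonneg hlogL0,
      abs_of_nonneg (Real.rpow_nonneg hL0.le _)] at hb
    have h1 : (1 + δ) * L ^ θ * Real.log L
        ≤ (1 + δ) * L ^ θ * (c * C₀ / (4 * (1 + δ)) * L ^ (1 - θ)) := by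
      have := mul_le_mul_of_nonneg_left hb
        (show (0:ℝ) ≤ (1 + δ) * L ^ θ by positivity)
      linarith [this]
    have h2 : (1 + δ) * L ^ θ * (c * C₀ / (4 * (1 + δ)) * L ^ (1 - θ))
        = c * C₀ / 4 * (L ^ θ * L ^ (1 - θ)) := by
      field_simp
    have h3 : L ^ θ * L ^ (1 - θ) = L := by
      rw [← Real.rpow_add hL0]; norm_num
    have h4 : c * C₀ / 4 * L < C₀ * (L - 1) * c := by
      nlinarith [mul_pos hc hC₀0]
    calc (1 + δ) * L ^ θ * Real.log L
        ≤ c * C₀ / 4 * (L ^ θ * L ^ (1 - θ)) := by linarith [h1, h2.ge, h2.le]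
      _ = c * C₀ / 4 * L := by rw [h3]
      _ < C₀ * (L - 1) * c := h4
  -- eventual fact EB (case B)
  have hEB : ∀ᶠ L : ℝ in atTop, (1 + δ) * (1 + d * L) < C₀ * θ * (L - 1) := by
    have gap : 0 < C₀ * θ - (1 + δ) * d := by linarith
    rw [eventually_atTop]
    refine ⟨((1 + δ) + C₀ * θ) / (C₀ * θ - (1 + δ) * d) + 1, fun L hL => ?_⟩
    have h1 : (C₀ * θ - (1 + δ) * d) * (((1 + δ) + C₀ * θ) / (C₀ * θ - (1 + δ) * d) + 1)
        = ((1 + δ) + C₀ * θ) + (C₀ * θ - (1 + δ) * d) := by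
      field_simp
    have h2 := mul_le_mul_of_nonneg_left hL gap.le
    rw [h1] at h2
    nlinarith [h2]
  -- eventual fact for (log n)^d small
  have hlogd : ∀ᶠ n : ℕ in atTop, Real.log n ^ d ≤ (n : ℝ) / 4 := by
    have hlo := (isLittleO_log_rpow_rpow_atTop d (show (0:ℝ) < 1 by norm_num))
    have hb := (hlo.comp_tendsto hcast).def (show (0:ℝ) < 1/4 by norm_num)
    filter_upwards [hb, hcast.eventually_ge_atTop 1, hlogt.eventually_ge_atTop 0]
      with n hb hn1 hlgn
    simp only [Function.comp] at hb
    rw [Real.norm_eq_abs, Real.norm_eq_abs, abs_of_nonneg (Real.rpow_nonneg hlgn _),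
      abs_of_nonneg (Real.rpow_nonneg (by linarith) _)] at hb
    rw [Real.rpow_one] at hb
    linarith
  -- main part
  filter_upwards [hcast.eventually_ge_atTop (x₀ + 16), hcast.eventually_ge_atTop 100,
    hlogt.eventually_ge_atTop 16, hLt.eventually_ge_atTop 2,
    hhalf.eventually_ge_atTop 3, hLt.eventually hEA, hLt.eventually hEB, hlogd]
    with n hnx₀ hn100 hln16 hL2 hF hA hB hC
  set L : ℝ := Real.log (Real.log n) with hLdef
  set x : ℝ := (n : ℝ) - 16 with hxdef
  obtain ⟨m, hm1, hm2, hm3⟩ := hx₀ x (by rw [hxdef]; linarith)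
  have hlogn0 : (0:ℝ) < Real.log n := by linarith
  have hx2pos : (1:ℝ) ≤ x / 2 := by rw [hxdef]; linarith
  have hlogx0 : 0 ≤ Real.log (x / 2) := Real.log_nonneg hx2pos
  have hlogx : Real.log (x / 2) ≤ Real.log n := by
    apply Real.log_le_log (by linarith)
    rw [hxdef]; linarith
  have hpow : Real.log (x / 2) ^ d ≤ Real.log n ^ d :=
    Real.rpow_le_rpow hlogx0 hlogx (by linarith)
  have hpown : Real.log (x / 2) ^ d ≤ (n : ℝ) / 4 := le_trans hpow hC
  -- m > n/2
  have hm_half : (n : ℝ) / 2 < (m : ℝ) := by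
    have : x - Real.log (x / 2) ^ d ≥ (n : ℝ) / 2 := by
      rw [hxdef]; linarith
    linarith
  have hm_pos : 1 ≤ m := by
    by_contra h
    push_neg at h
    interval_cases m
    · simp at hm_half; linarith
  have hm16 : m + 16 ≤ n := by
    have : (m : ℝ) + 16 ≤ (n : ℝ) := by rw [hxdef] at hm2; linarith
    exact_mod_cast this
  have hmn : m ≤ n := by omega
  refine ⟨n - m, by omega, by omega, ?_⟩
  have hnk : n - (n - m) = m := by omega
  rw [hnk]
  set k : ℕ := n - m with hkdef
  have hk16 : 16 ≤ k := by omega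
  have hkcast : (k : ℝ) = (n : ℝ) - (m : ℝ) := by
    rw [hkdef, Nat.cast_sub hmn]
  -- upper bound on k
  have hpow16 : (16:ℝ) ≤ Real.log n ^ d := by
    have : Real.log n ^ (1:ℝ) ≤ Real.log n ^ d :=
      Real.rpow_le_rpow_of_exponent_le (by linarith) hd1
    rw [Real.rpow_one] at this
    linarith
  have hk_ub : (k : ℝ) ≤ 2 * Real.log n ^ d := by
    rw [hkcast, hxdef] at *
    have : (n : ℝ) - (m : ℝ) < 16 + Real.log (((n:ℝ) - 16) / 2) ^ d := by linarith [hm1]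
    linarith [hpow]
  -- log k bounds
  have hkpos : (0:ℝ) < (k : ℝ) := by
    have : (16:ℝ) ≤ (k:ℝ) := by exact_mod_cast hk16
    linarith
  have hk16R : (16:ℝ) ≤ (k:ℝ) := by exact_mod_cast hk16
  have hlogk_lb : Real.log 16 ≤ Real.log k := Real.log_le_log (by norm_num) hk16R
  have hlogk0 : 0 ≤ Real.log k := by linarith
  have hloglogk : c ≤ Real.log (Real.log k) :=
    Real.log_le_log (by linarith) hlogk_lb
  have hloglogk0 : 0 < Real.log (Real.log k) := lt_of_lt_of_le hc hloglogk
  have hlogk_ub : Real.log k ≤ 1 + d * L := by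
    have h1 : Real.log k ≤ Real.log (2 * Real.log n ^ d) :=
      Real.log_le_log hkpos hk_ub
    rw [Real.log_mul (by norm_num) (by positivity), Real.log_rpow hlogn0] at h1
    have : Real.log 2 < 1 := by
      linarith [Real.log_two_lt_d9]
    rw [hLdef]; linarith
  -- m side bounds
  have hn2pos : (1:ℝ) < (n:ℝ)/2 := by linarith
  have hlogm_lb : Real.log ((n:ℝ)/2) ≤ Real.log m :=
    Real.log_le_log (by linarith) hm_half.le
  have hlogn2pos : 0 < Real.log ((n:ℝ)/2) := Real.log_pos hn2pos
  have hllm : (3:ℝ) ≤ Real.log (Real.log m) := by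
    calc (3:ℝ) ≤ Real.log (Real.log ((n:ℝ)/2)) := hF
      _ ≤ Real.log (Real.log m) := Real.log_le_log hlogn2pos hlogm_lb
  have hlllm_pos : 0 < Real.log (Real.log (Real.log m)) :=
    Real.log_pos (by linarith)
  have hlogm_ub : Real.log m ≤ Real.log n :=
    Real.log_le_log (by linarith) (by exact_mod_cast hmn)
  have hllm_ub : Real.log (Real.log m) ≤ L :=
    Real.log_le_log (by linarith [hlogm_lb, hlogn2pos]) hlogm_ub
  have hlllm_ub : Real.log (Real.log (Real.log m)) ≤ Real.log L :=
    Real.log_le_log (by linarith) hllm_ub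
  -- log log m ≥ L - 1
  have hllm_L : L - 1 ≤ Real.log (Real.log m) := by
    have hne : (n:ℝ) ≠ 0 := by linarith
    have hdiv : Real.log ((n:ℝ)/2) = Real.log n - Real.log 2 :=
      Real.log_div hne (by norm_num)
    have hlog2 : Real.log 2 < 1 := by linarith [Real.log_two_lt_d9]
    have h2 : Real.log n / 2 ≤ Real.log n - Real.log 2 := by linarith
    have h3 : Real.log (Real.log n / 2) ≤ Real.log (Real.log ((n:ℝ)/2)) := by
      rw [hdiv]
      exact Real.log_le_log (by linarith) h2
    have h4 : Real.log (Real.log n / 2) = L - Real.log 2 := by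
      rw [hLdef, Real.log_div (by linarith) (by norm_num)]
    have h5 : Real.log (Real.log ((n:ℝ)/2)) ≤ Real.log (Real.log m) :=
      Real.log_le_log hlogn2pos hlogm_lb
    linarith
  have hlogL_pos : 0 < Real.log L := Real.log_pos (by linarith)
  -- middle bound
  have hmid : C₀ * (L - 1) / Real.log L
      ≤ C₀ * Real.log (Real.log m) / Real.log (Real.log (Real.log m)) := by
    apply div_le_div₀ (by positivity)
      (mul_le_mul_of_nonneg_left hllm_L hC₀0.le) hlllm_pos hlllm_ub
  -- final
  have hfin : (1 + δ) * Real.log k / Real.log (Real.log k) < C₀ * (L - 1) / Real.log L := by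
    by_cases hcase : Real.log k ≤ L ^ θ
    · have hstep : (1 + δ) * Real.log k / Real.log (Real.log k) ≤ (1 + δ) * L ^ θ / c :=
        div_le_div₀ (by positivity)
          (mul_le_mul_of_nonneg_left hcase (by linarith)) hc hloglogk
      refine lt_of_le_of_lt hstep ?_
      rw [div_lt_div_iff₀ hc hlogL_pos]
      calc (1 + δ) * L ^ θ * Real.log L < C₀ * (L - 1) * c := hA
        _ = C₀ * (L - 1) * c := rfl
    · push_neg at hcase
      have hLpos : (0:ℝ) < L := by linarith
      have hllk : θ * Real.log L < Real.log (Real.log k) := by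
        have := Real.log_lt_log (by positivity : (0:ℝ) < L ^ θ) hcase
        rwa [Real.log_rpow hLpos] at this
      have hstep : (1 + δ) * Real.log k / Real.log (Real.log k)
          ≤ (1 + δ) * (1 + d * L) / (θ * Real.log L) :=
        div_le_div₀ (by positivity)
          (mul_le_mul_of_nonneg_left hlogk_ub (by linarith))
          (by positivity) hllk.le
      refine lt_of_le_of_lt hstep ?_
      rw [div_lt_div_iff₀ (by positivity) hlogL_pos]
      have := mul_lt_mul_of_pos_right hB hlogL_pos
      calc (1 + δ) * (1 + d * L) * Real.log L
          < C₀ * θ * (L - 1) * Real.log L := this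
        _ = C₀ * (L - 1) * (θ * Real.log L) := by ring
  calc (1 + δ) * Real.log k / Real.log (Real.log k)
      < C₀ * (L - 1) / Real.log L := hfin
    _ ≤ C₀ * Real.log (Real.log m) / Real.log (Real.log (Real.log m)) := hmid
    _ ≤ (m.primeFactors.card : ℝ) := hm3
end

section
/- Let B > 1 and let η : ℝ → ℝ be a smooth function supported on [−1, 1] satisfying |η^{(m)}(u)| ≤ B^m·(m!)² for all integers m ≥ 0 and all u ∈ ℝ. Define the Fourier transform η̂(t) := (1/(2π))·∫_ℝ η(u)·e^{itu} du. Then for every constant c with 0 < c < 2/(e·√B) there is a constant C (depending on c, B, η) such that |η̂(t)| ≤ C·exp(−c·|t|^{1/2}) for all real t. -/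
open MeasureTheory Complex Real FourierTransform

/-- Let `B > 1` and let `η : ℝ → ℝ` be smooth, supported on `[-1, 1]`, with
`|η^(m)(u)| ≤ B^m * (m!)²` for all `m ≥ 0` and all `u`. Then for every `0 < c < 2/(e√B)`
there is a constant `C` such that the Fourier transform
`η̂(t) = (1/(2π)) ∫ η(u) e^{itu} du` satisfies `|η̂(t)| ≤ C * exp(-c * |t|^(1/2))`. -/
theorem stmt_15 (B : ℝ) (hB : 1 < B) (η : ℝ → ℝ)
    (hη_smooth : ContDiff ℝ (⊤ : ℕ∞) η)
    (hη_supp : ∀ u : ℝ, u ∉ Set.Icc (-1 : ℝ) 1 → η u = 0)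
    (hη_deriv : ∀ m : ℕ, ∀ u : ℝ,
      |iteratedDeriv m η u| ≤ B ^ m * (Nat.factorial m : ℝ) ^ 2)
    (c : ℝ) (hc : 0 < c) (hc' : c < 2 / (Real.exp 1 * Real.sqrt B)) :
    ∃ C : ℝ, ∀ t : ℝ,
      ‖(1 / (2 * Real.pi) : ℂ) *
          ∫ u : ℝ, (η u : ℂ) * Complex.exp (Complex.I * (t : ℂ) * (u : ℂ))‖
        ≤ C * Real.exp (-c * |t| ^ ((1 : ℝ) / 2)) := by
  have hB0 : (0:ℝ) < B := lt_trans one_pos hB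
  set f : ℝ → ℂ := fun u => (η u : ℂ) with hf_def
  have hsm : ∀ m : ℕ, ContDiff ℝ (⊤ : ℕ∞) η := fun _ => hη_smooth
  -- all iterated derivatives vanish outside [-1,1]
  have hsupp : ∀ m : ℕ, ∀ u : ℝ, u ∉ Set.Icc (-1 : ℝ) 1 → iteratedDeriv m η u = 0 := by
    intro m
    induction m with
    | zero => simpa using hη_supp
    | succ n ih =>
      intro u hu
      rw [iteratedDeriv_succ]
      have hopen : IsOpen (Set.Icc (-1:ℝ) 1)ᶜ := isOpen_compl_iff.2 isClosed_Icc
      have hev : iteratedDeriv n η =ᶠ[nhds u] (fun _ => (0:ℝ)) :=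
        Filter.eventually_of_mem (hopen.mem_nhds hu) (fun x hx => ih x hx)
      rw [hev.deriv_eq]
      simp
  have hcs : ∀ m : ℕ, HasCompactSupport (iteratedDeriv m η) := by
    intro m
    apply HasCompactSupport.of_support_subset_isCompact isCompact_Icc
    intro u hu
    by_contra h
    exact hu (hsupp m u h)
  have hcont : ∀ m : ℕ, Continuous (iteratedDeriv m η) :=
    fun m => hη_smooth.continuous_iteratedDeriv m (by exact_mod_cast le_top)
  have hint : ∀ m : ℕ, Integrable (iteratedDeriv m η) :=
    fun m => (hcont m).integrable_of_hasCompactSupport (hcs m)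
  -- L¹ bound
  have hL1 : ∀ m : ℕ, ∫ u : ℝ, ‖iteratedDeriv m η u‖ ≤ 2 * (B ^ m * (Nat.factorial m : ℝ) ^ 2) := by
    intro m
    have h1 : ∫ u : ℝ, ‖iteratedDeriv m η u‖
        = ∫ u in Set.Icc (-1:ℝ) 1, ‖iteratedDeriv m η u‖ := by
      rw [MeasureTheory.setIntegral_eq_integral_of_forall_compl_eq_zero]
      intro u hu
      simp [hsupp m u hu]
    rw [h1]
    have h2 : ‖∫ u in Set.Icc (-1:ℝ) 1, ‖iteratedDeriv m η u‖‖
        ≤ (B ^ m * (Nat.factorial m : ℝ) ^ 2) * (volume (Set.Icc (-1:ℝ) 1)).toReal := by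
      apply norm_setIntegral_le_of_norm_le_const (by simp)
      intro x _
      simpa [abs_abs] using hη_deriv m x
    have h3 : (volume (Set.Icc (-1:ℝ) 1)).toReal = 2 := by
      simp [Real.volume_Icc]
      norm_num
    calc ∫ u in Set.Icc (-1:ℝ) 1, ‖iteratedDeriv m η u‖
        ≤ ‖∫ u in Set.Icc (-1:ℝ) 1, ‖iteratedDeriv m η u‖‖ := le_abs_self _
      _ ≤ (B ^ m * (Nat.factorial m : ℝ) ^ 2) * 2 := by rw [← h3]; exact h2
      _ = 2 * (B ^ m * (Nat.factorial m : ℝ) ^ 2) := by ring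
  -- iterated derivatives of the complexified function
  have h_id : ∀ m : ℕ, iteratedDeriv m f = fun u => ((iteratedDeriv m η u : ℝ) : ℂ) := by
    intro m
    induction m with
    | zero => simp [hf_def]
    | succ n ih =>
      rw [iteratedDeriv_succ, ih, iteratedDeriv_succ]
      ext u
      have hd : HasDerivAt (iteratedDeriv n η) (deriv (iteratedDeriv n η) u) u :=
        ((hη_smooth.differentiable_iteratedDeriv n (by exact_mod_cast ENat.coe_lt_top n)) u).hasDerivAt
      exact hd.ofReal_comp.deriv
  have hf_cd : ContDiff ℝ ((⊤ : ℕ∞) : WithTop ℕ∞) f :=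
    Complex.ofRealCLM.contDiff.comp (hη_smooth.of_le (by simp))
  have hf_int : ∀ n : ℕ, (n : ℕ∞) ≤ (⊤ : ℕ∞) → Integrable (iteratedDeriv n f) := by
    intro n _
    rw [h_id n]
    exact (hint n).ofReal
  -- key Fourier bound
  have hkey : ∀ m : ℕ, ∀ x : ℝ,
      (2 * π * |x|) ^ m * ‖𝓕 f x‖ ≤ 2 * (B ^ m * (Nat.factorial m : ℝ) ^ 2) := by
    intro m x
    have hF := Real.fourier_iteratedDeriv (N := (⊤ : ℕ∞)) hf_cd hf_int
      (le_top : (m : ℕ∞) ≤ ⊤)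
    have h1 : ‖𝓕 (iteratedDeriv m f) x‖ ≤ 2 * (B ^ m * (Nat.factorial m : ℝ) ^ 2) := by
      refine le_trans (VectorFourier.norm_fourierIntegral_le_integral_norm _ _ _ _ _) ?_
      calc ∫ u : ℝ, ‖iteratedDeriv m f u‖ = ∫ u : ℝ, ‖iteratedDeriv m η u‖ := by
            rw [h_id m]; simp
        _ ≤ _ := hL1 m
    have h2 : 𝓕 (iteratedDeriv m f) x = (2 * π * Complex.I * x) ^ m • 𝓕 f x := by
      rw [hF]
    rw [h2] at h1
    rw [norm_smul] at h1
    have h3 : ‖(2 * π * Complex.I * (x:ℂ)) ^ m‖ = (2 * π * |x|) ^ m := by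
      rw [norm_pow]
      congr 1
      simp only [norm_mul, Complex.norm_I, Complex.norm_real, Real.norm_eq_abs,
        abs_of_pos Real.pi_pos]
      norm_num
    rw [h3] at h1
    exact h1
  -- relate the given integral to the Fourier transform
  have hrel : ∀ t : ℝ,
      (∫ u : ℝ, (η u : ℂ) * Complex.exp (Complex.I * (t : ℂ) * (u : ℂ)))
        = 𝓕 f (-t / (2 * π)) := by
    intro t
    rw [Real.fourier_eq']
    congr 1
    ext u
    rw [smul_eq_mul, mul_comm]
    congr 1
    have hπ : (2:ℝ) * π ≠ 0 := by positivity
    have : -2 * π * (u * (-t / (2 * π))) = t * u := by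
      field_simp
    rw [show ((inner ℝ u (-t / (2 * π)) : ℝ)) = u * (-t / (2 * π)) from by rw [RCLike.inner_apply', conj_trivial], this]
    push_cast
    ring_nf
  -- now the main estimate
  refine ⟨Real.exp 1 ^ 2 / π, fun t => ?_⟩
  have hexp2 : Real.exp 1 ^ 2 = Real.exp 2 := by
    rw [← Real.exp_nat_mul]; norm_num
  have hrpow : |t| ^ ((1:ℝ)/2) = Real.sqrt |t| := (Real.sqrt_eq_rpow |t|).symm
  set T := |t| with hT_def
  have hT0 : 0 ≤ T := abs_nonneg t
  set w : ℝ := -t / (2 * π) with hw_def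
  have hww : 2 * π * |w| = T := by
    rw [hw_def, abs_div, abs_neg, abs_of_pos (by positivity : (0:ℝ) < 2*π)]
    field_simp
    rfl
  set m : ℕ := ⌊Real.sqrt (T / B) / Real.exp 1⌋₊ with hm_def
  -- step 1 : ‖𝓕 f w‖ ≤ 2 * exp(-2m)
  have hstep1 : ‖𝓕 f w‖ ≤ 2 * Real.exp (-(2 * (m:ℝ))) := by
    have hxm : Real.exp (-(2 * (m:ℝ))) = Real.exp (-2) ^ m := by
      rw [← Real.exp_nat_mul]; ring_nf
    rw [hxm]
    rcases Nat.eq_zero_or_pos m with hm0 | hmpos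
    · rw [hm0]
      simpa using hkey 0 w
    · have hT_pos : 0 < T := by
        rcases eq_or_lt_of_le hT0 with h | h
        · exfalso
          have : Real.sqrt (T / B) / Real.exp 1 = 0 := by
            rw [← h]; simp
          rw [hm_def, this] at hmpos
          simp at hmpos
        · exact h
      have hm_le : (m:ℝ) ≤ Real.sqrt (T/B) / Real.exp 1 := Nat.floor_le (by positivity)
      have h1 : (m:ℝ) * Real.exp 1 ≤ Real.sqrt (T/B) := by
        rw [le_div_iff₀ (Real.exp_pos 1)] at hm_le; exact hm_le
      have h2 : ((m:ℝ) * Real.exp 1)^2 ≤ T / B := by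
        calc ((m:ℝ) * Real.exp 1)^2 ≤ Real.sqrt (T/B)^2 := by
              apply pow_le_pow_left₀ (by positivity) h1
          _ = T/B := Real.sq_sqrt (by positivity)
      have h3 : B * ((m:ℝ)^2 * Real.exp 1 ^ 2) ≤ T := by
        have := (le_div_iff₀ hB0).mp (by nlinarith : ((m:ℝ)^2 * Real.exp 1 ^ 2) ≤ T / B)
        linarith
      have h4 : B * (m:ℝ)^2 ≤ T * Real.exp (-2) := by
        have he : Real.exp 2 * Real.exp (-2) = 1 := by
          rw [← Real.exp_add]; norm_num
        have he2 : (0:ℝ) < Real.exp (-2) := Real.exp_pos _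
        rw [hexp2] at h3
        calc B * (m:ℝ)^2 = B * ((m:ℝ)^2 * Real.exp 2) * Real.exp (-2) := by
              rw [show B * ((m:ℝ)^2 * Real.exp 2) * Real.exp (-2)
                  = B * (m:ℝ)^2 * (Real.exp 2 * Real.exp (-2)) from by ring, he, mul_one]
          _ ≤ T * Real.exp (-2) := mul_le_mul_of_nonneg_right h3 he2.le
      have hfact : ((Nat.factorial m : ℝ)) ≤ (m:ℝ)^m := by
        exact_mod_cast Nat.factorial_le_pow m
      have hBm : B^m * ((Nat.factorial m : ℝ))^2 ≤ T^m * Real.exp (-2) ^ m := by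
        calc B^m * ((Nat.factorial m : ℝ))^2 ≤ B^m * ((m:ℝ)^m)^2 := by
              apply mul_le_mul_of_nonneg_left _ (by positivity)
              apply pow_le_pow_left₀ (by positivity) hfact
          _ = (B * (m:ℝ)^2)^m := by rw [mul_pow, ← pow_mul, ← pow_mul, Nat.mul_comm]
          _ ≤ (T * Real.exp (-2))^m := pow_le_pow_left₀ (by positivity) h4 m
          _ = T^m * Real.exp (-2) ^ m := mul_pow _ _ _
      have hkeym : T ^ m * ‖𝓕 f w‖ ≤ 2 * (B ^ m * (Nat.factorial m : ℝ) ^ 2) := by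
        have := hkey m w
        rwa [hww] at this
      have hTm : (0:ℝ) < T^m := pow_pos hT_pos m
      have : T ^ m * ‖𝓕 f w‖ ≤ T ^ m * (2 * Real.exp (-2) ^ m) := by
        calc T ^ m * ‖𝓕 f w‖ ≤ 2 * (B ^ m * (Nat.factorial m : ℝ) ^ 2) := hkeym
          _ ≤ 2 * (T^m * Real.exp (-2) ^ m) := by linarith
          _ = T ^ m * (2 * Real.exp (-2) ^ m) := by ring
      exact le_of_mul_le_mul_left this hTm
  -- step 2 : exp(-2m) ≤ exp 2 * exp(-c √T)
  have hstep2 : Real.exp (-(2 * (m:ℝ))) ≤ Real.exp 2 * Real.exp (-c * Real.sqrt T) := by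
    rw [← Real.exp_add]
    apply Real.exp_le_exp.2
    have hfloor : Real.sqrt (T/B) / Real.exp 1 < (m:ℝ) + 1 := Nat.lt_floor_add_one _
    have hsq : Real.sqrt (T/B) = Real.sqrt T / Real.sqrt B := Real.sqrt_div hT0 B
    have hsB : (0:ℝ) < Real.sqrt B := Real.sqrt_pos.2 hB0
    have he1 : (0:ℝ) < Real.exp 1 := Real.exp_pos 1
    have h5 : c * Real.sqrt T ≤ 2 / (Real.exp 1 * Real.sqrt B) * Real.sqrt T :=
      mul_le_mul_of_nonneg_right hc'.le (Real.sqrt_nonneg T)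
    have h6 : 2 / (Real.exp 1 * Real.sqrt B) * Real.sqrt T
        = 2 * (Real.sqrt (T/B) / Real.exp 1) := by
      rw [hsq]; ring
    have h7 : c * Real.sqrt T < 2 * ((m:ℝ) + 1) := by
      rw [h6] at h5
      nlinarith
    linarith
  -- put everything together
  have hnorm : ‖(1 / (2 * ↑π) : ℂ)‖ = 1 / (2 * π) := by
    rw [norm_div, norm_one]
    rw [show ((2 * ↑π : ℂ)) = ((2 * π : ℝ) : ℂ) by push_cast; ring]
    rw [Complex.norm_real, Real.norm_eq_abs, abs_of_pos (by positivity)]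
  rw [hrel t, norm_mul, hnorm, hrpow]
  calc 1 / (2 * π) * ‖𝓕 f w‖
      ≤ 1 / (2 * π) * (2 * Real.exp (-(2 * (m:ℝ)))) := by
        apply mul_le_mul_of_nonneg_left hstep1 (by positivity)
    _ ≤ 1 / (2 * π) * (2 * (Real.exp 2 * Real.exp (-c * Real.sqrt T))) := by
        apply mul_le_mul_of_nonneg_left _ (by positivity)
        have := hstep2
        nlinarith [Real.exp_pos (-c * Real.sqrt T)]
    _ = Real.exp 1 ^ 2 / π * Real.exp (-c * Real.sqrt T) := by
        rw [hexp2]; field_simp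
end

section
/- Let r ≥ 1 be an integer and let q₁ < q₂ < ⋯ < q_r denote the first r prime numbers. Then for all real numbers α₁, …, α_r with 0 < α_i < 1 for all i, α₁ + ⋯ + α_r = 1, and α₁ ≤ α₂ ≤ ⋯ ≤ α_r, one has ∏_{i=1}^r (32/(α_i·q_i⁵))^{α_i} ≤ ∏_{i=1}^r (32·r/q_i⁵)^{1/r}; that is, the supremum of ∏_{i=1}^r (32/(α_i·q_i⁵))^{α_i} over this simplex is attained at α₁ = ⋯ = α_r = 1/r. -/
/-- Let `r ≥ 1` and let `q_1 < ⋯ < q_r` be the first `r` primes. For all `α_1, …, α_r`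
with `0 < α_i < 1`, `∑ α_i = 1` and `α_1 ≤ ⋯ ≤ α_r`, one has
`∏ (32/(α_i q_i⁵))^(α_i) ≤ ∏ (32 r / q_i⁵)^(1/r)`; i.e., the supremum over this simplex
is attained at `α_1 = ⋯ = α_r = 1/r`. -/
theorem stmt_18 (r : ℕ) (hr : 1 ≤ r) (α : Fin r → ℝ)
    (hpos : ∀ i, 0 < α i) (hlt : ∀ i, α i < 1)
    (hsum : ∑ i, α i = 1)
    (hmono : ∀ i j : Fin r, i ≤ j → α i ≤ α j) :
    ∏ i : Fin r, (32 / (α i * (Nat.nth Nat.Prime (i : ℕ) : ℝ) ^ 5)) ^ (α i)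
      ≤ ∏ i : Fin r, (32 * (r : ℝ) / (Nat.nth Nat.Prime (i : ℕ) : ℝ) ^ 5) ^ ((1 : ℝ) / r) := by
  have hr0 : (0 : ℝ) < r := by positivity
  set p : Fin r → ℝ := fun i => (Nat.nth Nat.Prime (i : ℕ) : ℝ) ^ 5 with hp_def
  have hq : ∀ i : Fin r, (0:ℝ) < (Nat.nth Nat.Prime (i : ℕ) : ℝ) := by
    intro i
    exact_mod_cast (Nat.prime_nth_prime (i : ℕ)).pos
  have hp : ∀ i, 0 < p i := fun i => by have := hq i; positivity
  have hLpos : ∀ i : Fin r, (0:ℝ) < 32 / (α i * p i) := fun i => by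
    have := hpos i; have := hp i; positivity
  have hRpos : ∀ i : Fin r, (0:ℝ) < 32 * (r:ℝ) / p i := fun i => by
    have := hp i; positivity
  rw [← Real.log_le_log_iff (Finset.prod_pos fun i _ => Real.rpow_pos_of_pos (hLpos i) _)
      (Finset.prod_pos fun i _ => Real.rpow_pos_of_pos (hRpos i) _),
    Real.log_prod (fun i _ => (Real.rpow_pos_of_pos (hLpos i) _).ne'),
    Real.log_prod (fun i _ => (Real.rpow_pos_of_pos (hRpos i) _).ne')]
  simp only [Real.log_rpow (hLpos _), Real.log_rpow (hRpos _)]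
  have hlogL : ∀ i : Fin r, Real.log (32 / (α i * p i))
      = Real.log 32 - Real.log (α i) - Real.log (p i) := by
    intro i
    rw [Real.log_div (by norm_num) (by have := hpos i; have := hp i; positivity),
      Real.log_mul (hpos i).ne' (hp i).ne']
    ring
  have hlogR : ∀ i : Fin r, Real.log (32 * (r:ℝ) / p i)
      = Real.log 32 + Real.log r - Real.log (p i) := by
    intro i
    rw [Real.log_div (by positivity) (hp i).ne', Real.log_mul (by norm_num) hr0.ne']
  simp only [hlogL, hlogR]
  -- entropy part
  have hent : -Real.log r - ∑ i, α i * Real.log (α i) ≤ 0 := by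
    have key : ∀ i : Fin r, -Real.log r - Real.log (α i) ≤ ((r:ℝ) * α i)⁻¹ - 1 := by
      intro i
      have h1 : -Real.log r - Real.log (α i) = Real.log (((r:ℝ) * α i)⁻¹) := by
        rw [Real.log_inv, Real.log_mul hr0.ne' (hpos i).ne']; ring
      rw [h1]
      exact Real.log_le_sub_one_of_pos (by have := hpos i; positivity)
    have h2 : ∑ i, α i * (-Real.log r - Real.log (α i)) ≤ 0 := by
      calc ∑ i, α i * (-Real.log r - Real.log (α i))
          ≤ ∑ i, α i * (((r:ℝ) * α i)⁻¹ - 1) :=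
            Finset.sum_le_sum fun i _ =>
              mul_le_mul_of_nonneg_left (key i) (hpos i).le
        _ = ∑ i, ((r:ℝ)⁻¹ - α i) := by
            refine Finset.sum_congr rfl fun i _ => ?_
            have := (hpos i).ne'
            field_simp
        _ = 0 := by
            rw [Finset.sum_sub_distrib, hsum, Finset.sum_const, Finset.card_univ,
              Fintype.card_fin, nsmul_eq_mul, mul_inv_cancel₀ hr0.ne', sub_self]
    have expand : ∑ i, α i * (-Real.log r - Real.log (α i))
        = -Real.log r - ∑ i, α i * Real.log (α i) := by
      simp only [mul_sub, mul_neg]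
      rw [Finset.sum_sub_distrib, Finset.sum_neg_distrib, ← Finset.sum_mul, hsum, one_mul]
    linarith [expand ▸ h2]
  -- Chebyshev part
  have hpmono : ∀ i j : Fin r, i ≤ j → p i ≤ p j := by
    intro i j hij
    have : Nat.nth Nat.Prime (i:ℕ) ≤ Nat.nth Nat.Prime (j:ℕ) :=
      (Nat.nth_le_nth Nat.infinite_setOf_prime).mpr hij
    have : (Nat.nth Nat.Prime (i:ℕ) : ℝ) ≤ (Nat.nth Nat.Prime (j:ℕ) : ℝ) := by exact_mod_cast this
    exact pow_le_pow_left₀ (hq i).le this 5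
  have hcheb : (∑ i, Real.log (p i)) ≤ (r:ℝ) * ∑ i, α i * Real.log (p i) := by
    have hmv : MonovaryOn α (fun i => Real.log (p i)) (Finset.univ : Finset (Fin r)) := by
      intro i _ j _ hgij
      rcases le_total i j with h | h
      · exact hmono _ _ h
      · exfalso
        exact absurd (Real.log_le_log (hp j) (hpmono j i h)) (not_le.mpr hgij)
    have := hmv.sum_mul_sum_le_card_mul_sum
    rw [hsum, one_mul, Finset.card_univ, Fintype.card_fin] at this
    exact this
  have hcheb' : (1/(r:ℝ)) * ∑ i, Real.log (p i) ≤ ∑ i, α i * Real.log (p i) := by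
    rw [one_div, inv_mul_le_iff₀ hr0]
    exact hcheb
  -- combine
  have hL : ∑ i, α i * (Real.log 32 - Real.log (α i) - Real.log (p i))
      = Real.log 32 - (∑ i, α i * Real.log (α i)) - ∑ i, α i * Real.log (p i) := by
    simp only [mul_sub]
    rw [Finset.sum_sub_distrib, Finset.sum_sub_distrib, ← Finset.sum_mul, hsum, one_mul]
  have hRs : ∑ i : Fin r, (1:ℝ)/r * (Real.log 32 + Real.log r - Real.log (p i))
      = Real.log 32 + Real.log r - (1/(r:ℝ)) * ∑ i, Real.log (p i) := by
    rw [← Finset.mul_sum, Finset.sum_sub_distrib, Finset.sum_add_distrib,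
      Finset.sum_const, Finset.sum_const, Finset.card_univ, Fintype.card_fin,
      nsmul_eq_mul, nsmul_eq_mul, mul_sub, mul_add]
    rw [← mul_assoc, ← mul_assoc, one_div, inv_mul_cancel₀ hr0.ne', one_mul, one_mul]
  rw [hL, hRs]
  linarith
end

section
/- There is an absolute constant C > 0 such that for every real R ≥ 3 and every real t, one has ∑_{primes p ≤ R} (1/p)·min{2, (1+|t|)·(log p)/(log R)} ≤ C·(1 + log(1+|t|)). -/
open Finset Real


lemma lemA (N : ℕ) : (∑ p ∈ Finset.Ioc 0 N, if Nat.Prime p then Real.log p else 0)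
    ≤ N * Real.log 4 := by
  have h1 : (∑ p ∈ Finset.Ioc 0 N, if Nat.Prime p then Real.log p else 0)
      = Real.log (primorial N) := by
    rw [← Finset.sum_filter]
    rw [primorial]
    have hset : Finset.filter Nat.Prime (Finset.Ioc 0 N)
        = Finset.filter Nat.Prime (Finset.range (N+1)) := by
      ext p
      simp only [Finset.mem_filter, Finset.mem_Ioc, Finset.mem_range]
      constructor
      · rintro ⟨⟨_, h2⟩, hp⟩; exact ⟨Nat.lt_succ_of_le h2, hp⟩
      · rintro ⟨h2, hp⟩; exact ⟨⟨hp.pos, Nat.lt_succ_iff.mp h2⟩, hp⟩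
    rw [hset]
    push_cast
    rw [Real.log_prod]
    · intro p hp
      exact_mod_cast (Finset.mem_filter.mp hp).2.pos.ne'
  rw [h1]
  calc Real.log (primorial N) ≤ Real.log ((4:ℕ)^N) := by
        apply Real.log_le_log (by exact_mod_cast primorial_pos N)
        exact_mod_cast primorial_le_4_pow N
    _ = N * Real.log 4 := by push_cast; rw [Real.log_pow]



lemma lemB (N : ℕ) : (∑ p ∈ Finset.Ioc 0 N, if Nat.Prime p then Real.log p / p else 0)
    ≤ 7 * Real.log (N+1) := by
  induction N using Nat.strong_induction_on with
  | _ N ih =>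
  rcases lt_or_ge N 2 with hN | hN
  · interval_cases N
    · simp
    · have : Finset.Ioc 0 1 = {1} := by decide
      rw [this]
      norm_num
      positivity
  · set m := N / 2 with hm
    have hmN : m < N := Nat.div_lt_self (by omega) one_lt_two
    have hsplit : (∑ p ∈ Finset.Ioc 0 N, if Nat.Prime p then Real.log p / p else 0)
        = (∑ p ∈ Finset.Ioc 0 m, if Nat.Prime p then Real.log p / p else 0)
        + (∑ p ∈ Finset.Ioc m N, if Nat.Prime p then Real.log p / p else 0) := by
      rw [← Finset.sum_Ioc_consecutive _ (Nat.zero_le m) hmN.le]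
    rw [hsplit]
    have h2 : (∑ p ∈ Finset.Ioc m N, if Nat.Prime p then Real.log p / p else 0)
        ≤ Real.log 16 := by
      have hNpos : (0:ℝ) < N := by positivity
      calc (∑ p ∈ Finset.Ioc m N, if Nat.Prime p then Real.log p / p else 0)
          ≤ ∑ p ∈ Finset.Ioc m N, (2 / N) * (if Nat.Prime p then Real.log p else 0) := by
            apply Finset.sum_le_sum
            intro p hp
            rw [Finset.mem_Ioc] at hp
            by_cases hprime : Nat.Prime p
            · simp only [hprime, if_true]
              have hlogp : 0 ≤ Real.log p := Real.log_nonneg (by exact_mod_cast hprime.one_lt.le)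
              have hNle : (N:ℝ) ≤ 2 * p := by
                have : N ≤ 2 * p := by omega
                exact_mod_cast this
              have hppos : (0:ℝ) < p := by exact_mod_cast hprime.pos
              have h2p : (1:ℝ) ≤ 2/N * p := by
                rw [div_mul_eq_mul_div, le_div_iff₀ hNpos]; linarith
              rw [div_le_iff₀ hppos]
              nlinarith [mul_le_mul_of_nonneg_left h2p hlogp]
            · simp [hprime]
        _ = (2 / N) * ∑ p ∈ Finset.Ioc m N, (if Nat.Prime p then Real.log p else 0) := by
            rw [Finset.mul_sum]
        _ ≤ (2 / N) * ∑ p ∈ Finset.Ioc 0 N, (if Nat.Prime p then Real.log p else 0) := by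
            apply mul_le_mul_of_nonneg_left _ (by positivity)
            apply Finset.sum_le_sum_of_subset_of_nonneg
            · apply Finset.Ioc_subset_Ioc_left (Nat.zero_le m)
            · intro p _ _
              by_cases hprime : Nat.Prime p
              · simp only [hprime, if_true]
                exact Real.log_nonneg (by exact_mod_cast hprime.one_lt.le)
              · simp [hprime]
        _ ≤ (2 / N) * (N * Real.log 4) := by
            apply mul_le_mul_of_nonneg_left (lemA N) (by positivity)
        _ = 2 * Real.log 4 := by field_simp
        _ = Real.log 16 := by
            rw [show (16:ℝ) = 4^2 by norm_num, Real.log_pow]; push_cast; ring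
    have h1 := ih m hmN
    -- 7 log(m+1) + log 16 ≤ 7 log(N+1)
    have hkey : 7 * Real.log (m+1) + Real.log 16 ≤ 7 * Real.log (N+1) := by
      have hr : ((3:ℝ)/2) * (m+1) ≤ N + 1 := by
        have : 3 * (m + 1) ≤ 2 * (N + 1) := by omega
        have := (by exact_mod_cast this : (3:ℝ) * (m+1) ≤ 2 * (N+1))
        linarith
      have hlog : Real.log (m+1) + Real.log (3/2) ≤ Real.log (N+1) := by
        rw [← Real.log_mul (by positivity) (by norm_num)]
        apply Real.log_le_log (by positivity)
        linarith
      have h32 : Real.log 16 ≤ 7 * Real.log (3/2) := by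
        rw [show (7:ℝ) * Real.log (3/2) = Real.log ((3/2)^7) by rw [Real.log_pow]; push_cast; ring]
        apply Real.log_le_log (by norm_num)
        norm_num
      linarith
    linarith



lemma aux_ptwise {d lp p : ℝ} (hd : 0 < d) (hp : 0 < p) (h : d ≤ lp) :
    1/p ≤ (1/d) * (lp/p) := by
  rw [div_mul_div_comm, one_mul, div_le_div_iff₀ hp (by positivity)]
  nlinarith

lemma aux_logsum_nonneg (p : ℕ) : (0:ℝ) ≤ (if Nat.Prime p then Real.log p / p else 0) := by
  by_cases hprime : Nat.Prime p
  · simp only [hprime, if_true]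
    have h1 : (0:ℝ) < p := by exact_mod_cast hprime.pos
    have h2 := Real.log_nonneg (by exact_mod_cast hprime.one_lt.le : (1:ℝ) ≤ p)
    positivity
  · simp [hprime]

lemma aux_invsum_nonneg (y : ℝ) (p : ℕ) :
    (0:ℝ) ≤ (if Nat.Prime p ∧ y ≤ (p:ℝ) then 1/(p:ℝ) else 0) := by
  by_cases hc : Nat.Prime p ∧ y ≤ (p:ℝ)
  · simp only [hc, if_true]
    have h1 : (0:ℝ) < p := by exact_mod_cast hc.1.pos
    positivity
  · simp [hc]

/-- Key pointwise bound: if `d ≤ log p` for primes in range, the reciprocal sum is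
bounded by the Mertens sum over `1/d`. -/
lemma aux_sum_bound (s : Finset ℕ) (y d : ℝ) (hd : 0 < d)
    (hlow : ∀ p ∈ s, Nat.Prime p → y ≤ (p:ℝ) → d ≤ Real.log p) :
    (∑ p ∈ s, if Nat.Prime p ∧ y ≤ (p:ℝ) then 1/(p:ℝ) else 0)
    ≤ (1/d) * ∑ p ∈ s, (if Nat.Prime p then Real.log p / p else 0) := by
  rw [Finset.mul_sum]
  apply Finset.sum_le_sum
  intro p hp
  by_cases hc : Nat.Prime p ∧ y ≤ (p:ℝ)
  · rw [if_pos hc, if_pos hc.1]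
    exact aux_ptwise hd (by exact_mod_cast hc.1.pos) (hlow p hp hc.1 hc.2)
  · rw [if_neg hc]
    have := aux_logsum_nonneg p
    positivity

lemma lemC (k : ℕ) : ∀ y : ℝ, 2 ≤ y → ∀ N : ℕ, (N:ℝ) ≤ y ^ (2^k) →
    (∑ p ∈ Finset.Ioc 0 N, if Nat.Prime p ∧ y ≤ (p:ℝ) then 1/(p:ℝ) else 0)
    ≤ 28 * ((k:ℝ)+1) := by
  induction k with
  | zero =>
    intro y hy N hN
    have hylog : (0:ℝ) < Real.log y := Real.log_pos (by linarith)
    have h1 : (∑ p ∈ Finset.Ioc 0 N, if Nat.Prime p ∧ y ≤ (p:ℝ) then 1/(p:ℝ) else 0)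
        ≤ (1/Real.log y) * ∑ p ∈ Finset.Ioc 0 N, (if Nat.Prime p then Real.log p / p else 0) := by
      apply aux_sum_bound _ _ _ hylog
      intro p _ hprime hyp
      exact Real.log_le_log (by linarith) hyp
    have h2 : (1/Real.log y) * ∑ p ∈ Finset.Ioc 0 N, (if Nat.Prime p then Real.log p / p else 0)
        ≤ (1/Real.log y) * (7 * Real.log (N+1)) :=
      mul_le_mul_of_nonneg_left (lemB N) (by positivity)
    have hN1 : (N:ℝ) + 1 ≤ y^2 := by
      have : (N:ℝ) ≤ y := by simpa using hN
      nlinarith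
    have hlogN : Real.log (N+1) ≤ 2 * Real.log y := by
      calc Real.log (N+1) ≤ Real.log (y^2) := Real.log_le_log (by positivity) hN1
        _ = 2 * Real.log y := by rw [Real.log_pow]; push_cast; ring
    have h3 : (1/Real.log y) * (7 * Real.log (N+1)) ≤ 14 := by
      rw [div_mul_eq_mul_div, one_mul, div_le_iff₀ hylog]
      nlinarith
    push_cast
    linarith
  | succ k ih =>
    intro y hy N hN
    have hy0 : (0:ℝ) < y := by linarith
    by_cases hsmall : N ≤ ⌊y ^ (2^k)⌋₊
    · have hNk : (N:ℝ) ≤ y ^ (2^k) := by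
        calc (N:ℝ) ≤ ⌊y ^ (2^k)⌋₊ := by exact_mod_cast hsmall
          _ ≤ y ^ (2^k) := Nat.floor_le (by positivity)
      calc _ ≤ (28:ℝ) * ((k:ℝ)+1) := ih y hy N hNk
        _ ≤ 28 * ((↑(k+1):ℝ)+1) := by push_cast; linarith
    · push_neg at hsmall
      set M := ⌊y ^ (2^k)⌋₊ with hM
      have hylog : (0:ℝ) < Real.log y := Real.log_pos (by linarith)
      have hMN : M ≤ N := hsmall.le
      have hsplit : (∑ p ∈ Finset.Ioc 0 N, if Nat.Prime p ∧ y ≤ (p:ℝ) then 1/(p:ℝ) else 0)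
          = (∑ p ∈ Finset.Ioc 0 M, if Nat.Prime p ∧ y ≤ (p:ℝ) then 1/(p:ℝ) else 0)
          + (∑ p ∈ Finset.Ioc M N, if Nat.Prime p ∧ y ≤ (p:ℝ) then 1/(p:ℝ) else 0) := by
        rw [← Finset.sum_Ioc_consecutive _ (Nat.zero_le M) hMN]
      rw [hsplit]
      have hpart1 : (∑ p ∈ Finset.Ioc 0 M, if Nat.Prime p ∧ y ≤ (p:ℝ) then 1/(p:ℝ) else 0)
          ≤ 28 * ((k:ℝ)+1) := ih y hy M (Nat.floor_le (by positivity))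
      have hdpos : (0:ℝ) < 2^k * Real.log y := by positivity
      have hpart2 : (∑ p ∈ Finset.Ioc M N, if Nat.Prime p ∧ y ≤ (p:ℝ) then 1/(p:ℝ) else 0)
          ≤ 28 := by
        have h1 : (∑ p ∈ Finset.Ioc M N, if Nat.Prime p ∧ y ≤ (p:ℝ) then 1/(p:ℝ) else 0)
            ≤ (1/(2^k * Real.log y)) *
              ∑ p ∈ Finset.Ioc M N, (if Nat.Prime p then Real.log p / p else 0) := by
          apply aux_sum_bound _ _ _ hdpos
          intro p hp hprime _
          rw [Finset.mem_Ioc] at hp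
          have hpy : y ^ (2^k) < (p:ℝ) := by
            have := hp.1
            rwa [hM, Nat.floor_lt (by positivity)] at this
          calc (2^k : ℝ) * Real.log y = Real.log (y ^ (2^k)) := by
                rw [Real.log_pow]; push_cast; ring
            _ ≤ Real.log p := Real.log_le_log (by positivity) hpy.le
        have h2 : ∑ p ∈ Finset.Ioc M N, (if Nat.Prime p then Real.log p / p else 0)
            ≤ ∑ p ∈ Finset.Ioc 0 N, (if Nat.Prime p then Real.log p / p else 0) := by
          apply Finset.sum_le_sum_of_subset_of_nonneg
          · exact Finset.Ioc_subset_Ioc_left (Nat.zero_le M)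
          · intro p _ _; exact aux_logsum_nonneg p
        have h3 : Real.log ((N:ℝ)+1) ≤ ((2:ℝ)^(k+1) + 1) * Real.log y := by
          have hNy : (N:ℝ) + 1 ≤ y ^ (2^(k+1) + 1) := by
            have hy1 : (1:ℝ) ≤ y ^ (2^(k+1)) := one_le_pow₀ (by linarith)
            calc (N:ℝ) + 1 ≤ y ^ (2^(k+1)) + y ^ (2^(k+1)) := by linarith
              _ = 2 * y ^ (2^(k+1)) := by ring
              _ ≤ y * y ^ (2^(k+1)) := by nlinarith
              _ = y ^ (2^(k+1) + 1) := by rw [pow_succ]; ring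
          calc Real.log ((N:ℝ)+1) ≤ Real.log (y ^ (2^(k+1) + 1)) :=
                Real.log_le_log (by positivity) hNy
            _ = ((2:ℝ)^(k+1) + 1) * Real.log y := by rw [Real.log_pow]; push_cast; ring
        calc (∑ p ∈ Finset.Ioc M N, if Nat.Prime p ∧ y ≤ (p:ℝ) then 1/(p:ℝ) else 0)
            ≤ (1/(2^k * Real.log y)) *
              ∑ p ∈ Finset.Ioc 0 N, (if Nat.Prime p then Real.log p / p else 0) := by
              apply h1.trans
              exact mul_le_mul_of_nonneg_left h2 (by positivity)
          _ ≤ (1/(2^k * Real.log y)) * (7 * Real.log (N+1)) :=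
              mul_le_mul_of_nonneg_left (lemB N) (by positivity)
          _ ≤ 28 := by
              rw [div_mul_eq_mul_div, one_mul, div_le_iff₀ hdpos]
              have hk : ((2:ℝ)^(k+1) + 1) ≤ 4 * 2^k := by
                rw [pow_succ]
                have : (1:ℝ) ≤ 2^k := one_le_pow₀ (by norm_num)
                linarith
              have h4 := mul_le_mul_of_nonneg_right h3 (le_of_lt hylog)
              push_cast at *
              nlinarith [Real.log_nonneg (by linarith : (1:ℝ) ≤ (N:ℝ)+1)]
      push_cast
      linarith






/-- There is an absolute constant `C > 0` such that for every real `R ≥ 3` and every real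
`t`, one has `∑_{p ≤ R prime} (1/p) * min(2, (1+|t|) * log p / log R) ≤ C * (1 + log(1+|t|))`. -/
theorem stmt_19 :
    ∃ C : ℝ, 0 < C ∧ ∀ R : ℝ, 3 ≤ R → ∀ t : ℝ,
      (∑ p ∈ Finset.Icc 1 ⌊R⌋₊,
          if Nat.Prime p then
            (1 / (p : ℝ)) * min 2 ((1 + |t|) * Real.log p / Real.log R)
          else 0)
        ≤ C * (1 + Real.log (1 + |t|)) := by
  refine ⟨126, by norm_num, ?_⟩
  intro R hR t
  set T : ℝ := 1 + |t| with hTdef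
  have hT : 1 ≤ T := by rw [hTdef]; linarith [abs_nonneg t]
  have hT0 : 0 < T := by linarith
  set L : ℝ := Real.log R with hLdef
  have hL : 0 < L := Real.log_pos (by linarith)
  set x : ℝ := Real.exp (L / T) with hxdef
  have hx0 : 0 < x := Real.exp_pos _
  have hlogx : Real.log x = L / T := Real.log_exp _
  set y : ℝ := max 2 x with hydef
  set N : ℕ := ⌊R⌋₊ with hNdef
  set k : ℕ := ⌊Real.logb 2 T⌋₊ + 1 with hkdef
  have hIcc : Finset.Icc 1 N = Finset.Ioc 0 N := rfl
  rw [hIcc]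
  -- pointwise bound
  have hpt : ∀ p ∈ Finset.Ioc 0 N,
      (if Nat.Prime p then (1 / (p : ℝ)) * min 2 (T * Real.log p / L) else 0)
      ≤ (T/L) * (if Nat.Prime p ∧ (p:ℝ) ≤ x then Real.log p / p else 0)
        + 2 * (if Nat.Prime p ∧ y ≤ (p:ℝ) then 1/(p:ℝ) else 0) := by
    intro p _
    by_cases hprime : Nat.Prime p
    · have hppos : (0:ℝ) < p := by exact_mod_cast hprime.pos
      have hp2 : (2:ℝ) ≤ p := by exact_mod_cast hprime.two_le
      by_cases hxle : (p:ℝ) ≤ x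
      · have h1 : (1 / (p : ℝ)) * min 2 (T * Real.log p / L)
            ≤ (1 / (p : ℝ)) * (T * Real.log p / L) :=
          mul_le_mul_of_nonneg_left (min_le_right _ _) (by positivity)
        have h2 : (1 / (p : ℝ)) * (T * Real.log p / L) = (T/L) * (Real.log p / p) := by
          rw [div_mul_div_comm, div_mul_div_comm, one_mul, mul_comm (p:ℝ) L]
        rw [if_pos hprime, if_pos ⟨hprime, hxle⟩]
        have := aux_invsum_nonneg y p
        nlinarith [mul_le_mul_of_nonneg_left (aux_invsum_nonneg y p) (by norm_num : (0:ℝ) ≤ 2)]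
      · have hy : y ≤ (p:ℝ) := max_le hp2 (le_of_not_ge hxle)
        rw [if_pos hprime, if_neg (by tauto), if_pos ⟨hprime, hy⟩]
        have h1 : (1 / (p : ℝ)) * min 2 (T * Real.log p / L) ≤ (1 / (p : ℝ)) * 2 :=
          mul_le_mul_of_nonneg_left (min_le_left _ _) (by positivity)
        rw [mul_zero, zero_add]
        calc (1 / (p : ℝ)) * min 2 (T * Real.log p / L) ≤ (1 / (p : ℝ)) * 2 := h1
          _ = 2 * (1 / (p:ℝ)) := by ring
    · simp [hprime]
  have hsum : (∑ p ∈ Finset.Ioc 0 N,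
      if Nat.Prime p then (1 / (p : ℝ)) * min 2 (T * Real.log p / L) else 0)
      ≤ (T/L) * (∑ p ∈ Finset.Ioc 0 N, if Nat.Prime p ∧ (p:ℝ) ≤ x then Real.log p / p else 0)
        + 2 * (∑ p ∈ Finset.Ioc 0 N, if Nat.Prime p ∧ y ≤ (p:ℝ) then 1/(p:ℝ) else 0) := by
    rw [Finset.mul_sum, Finset.mul_sum, ← Finset.sum_add_distrib]
    exact Finset.sum_le_sum hpt
  -- Part 1 bound
  have hpart1 : (T/L) * (∑ p ∈ Finset.Ioc 0 N,
      if Nat.Prime p ∧ (p:ℝ) ≤ x then Real.log p / p else 0) ≤ 14 := by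
    by_cases hx2 : x < 2
    · have : (∑ p ∈ Finset.Ioc 0 N,
          if Nat.Prime p ∧ (p:ℝ) ≤ x then Real.log p / p else 0) = 0 := by
        apply Finset.sum_eq_zero
        intro p _
        apply if_neg
        rintro ⟨hprime, hple⟩
        have : (2:ℝ) ≤ p := by exact_mod_cast hprime.two_le
        linarith
      rw [this, mul_zero]; norm_num
    · push_neg at hx2
      set M : ℕ := min N ⌊x⌋₊ with hMdef
      have hMsub : Finset.Ioc 0 M ⊆ Finset.Ioc 0 N :=
        Finset.Ioc_subset_Ioc_right (min_le_left _ _)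
      have heq : (∑ p ∈ Finset.Ioc 0 N, if Nat.Prime p ∧ (p:ℝ) ≤ x then Real.log p / p else 0)
          = (∑ p ∈ Finset.Ioc 0 M, if Nat.Prime p ∧ (p:ℝ) ≤ x then Real.log p / p else 0) := by
        rw [Finset.sum_subset hMsub]
        intro p hpN hpM
        rw [Finset.mem_Ioc] at hpN
        apply if_neg
        rintro ⟨hprime, hple⟩
        have hfloor : p ≤ ⌊x⌋₊ := Nat.le_floor hple
        have : p ≤ M := le_min hpN.2 hfloor
        exact hpM (Finset.mem_Ioc.mpr ⟨hpN.1, this⟩)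
      rw [heq]
      have hle : (∑ p ∈ Finset.Ioc 0 M, if Nat.Prime p ∧ (p:ℝ) ≤ x then Real.log p / p else 0)
          ≤ (∑ p ∈ Finset.Ioc 0 M, if Nat.Prime p then Real.log p / p else 0) := by
        apply Finset.sum_le_sum
        intro p _
        by_cases hc : Nat.Prime p ∧ (p:ℝ) ≤ x
        · rw [if_pos hc, if_pos hc.1]
        · rw [if_neg hc]; exact aux_logsum_nonneg p
      have hB := lemB M
      have hMx : (M:ℝ) ≤ x :=
        le_trans (by exact_mod_cast Nat.cast_le.mpr (min_le_right N ⌊x⌋₊)) (Nat.floor_le hx0.le)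
      have hlogM : Real.log ((M:ℝ)+1) ≤ 2 * (L/T) := by
        calc Real.log ((M:ℝ)+1) ≤ Real.log (x^2) := by
              apply Real.log_le_log (by positivity)
              nlinarith
          _ = 2 * Real.log x := by rw [Real.log_pow]; push_cast; ring
          _ = 2 * (L/T) := by rw [hlogx]
      have hTL : 0 < T / L := by positivity
      calc (T/L) * (∑ p ∈ Finset.Ioc 0 M, if Nat.Prime p ∧ (p:ℝ) ≤ x then Real.log p / p else 0)
          ≤ (T/L) * (7 * Real.log ((M:ℝ)+1)) := by
            apply mul_le_mul_of_nonneg_left _ hTL.le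
            exact le_trans hle hB
        _ ≤ (T/L) * (7 * (2 * (L/T))) := by
            apply mul_le_mul_of_nonneg_left _ hTL.le
            linarith
        _ = 14 := by field_simp; ring
  -- Part 2 bound
  have hy2 : (2:ℝ) ≤ y := le_max_left _ _
  have hklog : Real.logb 2 T ≤ (k:ℝ) := by
    rw [hkdef]
    push_cast
    exact (Nat.lt_floor_add_one _).le
  have hTk : T ≤ (2:ℝ)^k := by
    have h1 : T = (2:ℝ) ^ (Real.logb 2 T) := (Real.rpow_logb (by norm_num) (by norm_num) hT0).symm
    have h2 : (2:ℝ) ^ (Real.logb 2 T) ≤ (2:ℝ) ^ ((k:ℝ)) :=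
      Real.rpow_le_rpow_of_exponent_le one_le_two hklog
    rw [h1]
    calc (2:ℝ) ^ (Real.logb 2 T) ≤ (2:ℝ) ^ ((k:ℝ)) := h2
      _ = (2:ℝ)^k := Real.rpow_natCast 2 k
  have hNy : (N:ℝ) ≤ y ^ (2^k) := by
    have h1 : (N:ℝ) ≤ R := Nat.floor_le (by linarith)
    have h2 : R = Real.exp L := (Real.exp_log (by linarith)).symm
    have h3 : Real.exp L ≤ Real.exp ((2^k : ℕ) * (L/T)) := by
      apply Real.exp_le_exp.mpr
      have hpk : ((2^k : ℕ):ℝ) = (2:ℝ)^k := by push_cast; ring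
      rw [hpk]
      have hLT : 0 ≤ L/T := by positivity
      calc L = T * (L/T) := by field_simp
        _ ≤ (2:ℝ)^k * (L/T) := mul_le_mul_of_nonneg_right hTk hLT
    have h4 : Real.exp ((2^k : ℕ) * (L/T)) = x ^ (2^k) := Real.exp_nat_mul _ _
    have h5 : x ^ (2^k) ≤ y ^ (2^k) := pow_le_pow_left₀ hx0.le (le_max_right _ _) _
    linarith [h1, h3, h5, h2.le, h2.ge, h4.le, h4.ge]
  have hC := lemC k y hy2 N hNy
  have hlogT : 0 ≤ Real.log T := Real.log_nonneg hT
  have hk1 : (k:ℝ) + 1 ≤ 2 * Real.log T + 2 := by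
    have h0 : 0 ≤ Real.logb 2 T := Real.logb_nonneg one_lt_two hT
    have h1 : ((⌊Real.logb 2 T⌋₊ : ℕ):ℝ) ≤ Real.logb 2 T := Nat.floor_le h0
    have h2 : Real.logb 2 T ≤ 2 * Real.log T := by
      rw [Real.logb, div_le_iff₀ (Real.log_pos one_lt_two)]
      nlinarith [Real.log_two_gt_d9, hlogT]
    rw [hkdef]
    push_cast
    linarith
  have hpart2 : 2 * (∑ p ∈ Finset.Ioc 0 N, if Nat.Prime p ∧ y ≤ (p:ℝ) then 1/(p:ℝ) else 0)
      ≤ 112 * Real.log T + 112 := by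
    calc 2 * (∑ p ∈ Finset.Ioc 0 N, if Nat.Prime p ∧ y ≤ (p:ℝ) then 1/(p:ℝ) else 0)
        ≤ 2 * (28 * ((k:ℝ)+1)) := by linarith
      _ ≤ 2 * (28 * (2 * Real.log T + 2)) := by linarith
      _ = 112 * Real.log T + 112 := by ring
  have : Real.log T = Real.log (1 + |t|) := by rw [hTdef]
  calc (∑ p ∈ Finset.Ioc 0 N,
      if Nat.Prime p then (1 / (p : ℝ)) * min 2 (T * Real.log p / L) else 0)
      ≤ 14 + (112 * Real.log T + 112) := by linarith
    _ ≤ 126 * (1 + Real.log T) := by linarith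
    _ = 126 * (1 + Real.log (1 + |t|)) := by rw [this]
end
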